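/- arXiv:2111.08813 — 11 statements merged into one kernel-verified Lean document; each statement's English description precedes it below -/
import Mathlib

section
/- Let G be a simple undirected graph with vertex set V and let k ≥ 1. Define d_k(x,y) = min(d(x,y), k+1) where d is the graph distance. If S ⊆ V is a threshold-k resolving set (i.e., for every pair x ≠ y in V there exists s ∈ S with d_k(s,x) ≠ d_k(s,y), and every vertex is within distance k of some sensor), then for any sensor s ∈ S and any distance j with 1 ≤ j ≤ k, there is at most one vertex x ∉ S at distance exactly j from s such that no other sensor s' ∈ S \ {s} measures x via a path avoiding s (i.e., x is in the attraction of s). Consequently, the attraction of any single sensor has at most k vertices. -/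
open SimpleGraph Finset

variable {V : Type*}

/-- Truncated graph distance `d_k(x,y) = min(d(x,y), k+1)`. -/
noncomputable def dk (G : SimpleGraph V) (k : ℕ) (x y : V) : ℕ := min (G.dist x y) (k + 1)

/-- `w` lies on a shortest path (in a tree: the unique path) between `x` and `y`. -/
def OnPath (G : SimpleGraph V) (x y w : V) : Prop :=
  G.dist x w + G.dist w y = G.dist x y

/-- `S` is a threshold-`k` resolving set for `G`. -/
def ThresholdResolving (G : SimpleGraph V) (k : ℕ) (S : Set V) : Prop :=
  (∀ x y : V, x ≠ y → ∃ s ∈ S, dk G k s x ≠ dk G k s y) ∧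
  (∀ x : V, ∃ s ∈ S, G.dist s x ≤ k)

/-- A sensor `s` directly measures `x`: `d(s,x) ≤ k` and no other sensor lies on the
path from `s` to `x`. -/
def DirectlyMeasures (G : SimpleGraph V) (k : ℕ) (S : Set V) (s x : V) : Prop :=
  G.dist s x ≤ k ∧ ∀ t ∈ S, t ≠ s → ¬ OnPath G s x t

/-- The threshold-`k` metric dimension of a finite graph. -/
noncomputable def Tmd (G : SimpleGraph V) [Fintype V] (k : ℕ) : ℕ :=
  sInf {m | ∃ S : Finset V, ThresholdResolving G k ↑S ∧ S.card = m}

/-- The path between the sensors `s₁ ≠ s₂` contains no other sensor. -/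
def SensorPath (G : SimpleGraph V) (S : Set V) (s₁ s₂ : V) : Prop :=
  s₁ ≠ s₂ ∧ s₁ ∈ S ∧ s₂ ∈ S ∧ ∀ t ∈ S, OnPath G s₁ s₂ t → t = s₁ ∨ t = s₂

/-- The edge `{a,b}` lies on the (tree-)path between `x` and `y`. -/
def EdgeOnPath (G : SimpleGraph V) (x y a b : V) : Prop :=
  G.Adj a b ∧ OnPath G x y a ∧ OnPath G x y b

/-- A leaf-path of length `ℓ` starting at `v`: an induced path `v = p 0, p 1, …, p ℓ`
with `deg v ≥ 3`, ending in a leaf, all internal vertices of degree 2. -/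
def IsLeafPath (G : SimpleGraph V) [Fintype V] [DecidableRel G.Adj]
    (v : V) (ℓ : ℕ) (p : Fin (ℓ + 1) → V) : Prop :=
  Function.Injective p ∧ p 0 = v ∧ 3 ≤ G.degree v ∧
  (∀ i : Fin ℓ, G.Adj (p i.castSucc) (p i.succ)) ∧
  G.degree (p (Fin.last ℓ)) = 1 ∧
  ∀ i : Fin (ℓ + 1), (i : ℕ) ≠ 0 → (i : ℕ) ≠ ℓ → G.degree (p i) = 2

/-- Upper complexity of a path of length `ℓ` (with `ℓ = q(3k+2)+r`). -/
def cbar (k ℓ : ℕ) : ℕ :=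
  2 * (ℓ / (3 * k + 2)) + (if 1 ≤ ℓ % (3 * k + 2) then 1 else 0) +
    (if 2 * k + 2 ≤ ℓ % (3 * k + 2) then 1 else 0)

/-- Lower complexity of a path of length `ℓ` (with `ℓ = q(3k+2)+r`). -/
def clow (k ℓ : ℕ) : ℕ :=
  2 * (ℓ / (3 * k + 2)) + (if k + 1 ≤ ℓ % (3 * k + 2) then 1 else 0) +
    (if 2 * k + 2 ≤ ℓ % (3 * k + 2) then 1 else 0)

/-- The type of a vertex `v` with respect to the sensor pair `(s, s')`. -/
noncomputable def typ (G : SimpleGraph V) (s s' v : V) : ℤ :=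
  ((G.dist v s : ℤ) - (G.dist v s' : ℤ) + (G.dist s s' : ℤ)) / 2

/-- The attraction of the pair of sensors `{s, s'}`. -/
def PairAttraction (G : SimpleGraph V) (k : ℕ) (S : Set V) (s s' : V) : Set V :=
  {x | x ∉ S ∧ DirectlyMeasures G k S s x ∧ DirectlyMeasures G k S s' x ∧
    (∀ t ∈ S, t ≠ s → t ≠ s' → ¬ DirectlyMeasures G k S t x) ∧
    ∀ y : V, y ≠ x → y ∉ S →
      (∀ t ∈ S, t ≠ s → t ≠ s' → ¬ DirectlyMeasures G k S t y) →
      dk G k s x ≠ dk G k s y ∨ dk G k s' x ≠ dk G k s' y}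

/-- The subset of sensors `S' ⊆ S` minimally resolves the vertex `x`. -/
def MinimallyResolves (G : SimpleGraph V) (k : ℕ) (S S' : Set V) (x : V) : Prop :=
  x ∉ S ∧ (∀ s ∈ S', G.dist s x ≤ k) ∧
  (∀ t ∈ S, t ∉ S' → ¬ DirectlyMeasures G k S t x) ∧
  (∀ y : V, y ≠ x → (∀ t ∈ S, t ∉ S' → ¬ DirectlyMeasures G k S t y) →
    ∃ s ∈ S', dk G k s x ≠ dk G k s y) ∧
  (∀ s ∈ S', DirectlyMeasures G k S s x)

lemma aux_path (G : SimpleGraph V) (hconn : G.Connected) (k : ℕ) (S : Set V)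
    (s : V) (x : V) (hxS : x ∉ S)
    (hno : ∀ t ∈ S, t ≠ s → ¬ DirectlyMeasures G k S t x) :
    ∀ n : ℕ, ∀ t ∈ S, t ≠ s → G.dist t x ≤ k → G.dist t x ≤ n →
      G.dist t x = G.dist t s + G.dist s x := by
  intro n
  induction n with
  | zero =>
    intro t ht hts hdk h0
    have htx : t ≠ x := fun h => hxS (h ▸ ht)
    have := hconn.pos_dist_of_ne htx
    omega
  | succ n ih =>
    intro t ht hts hdk h0
    have hndm := hno t ht hts
    unfold DirectlyMeasures at hndm
    push_neg at hndm
    obtain ⟨u, hu, hut, hpath⟩ := hndm hdk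
    unfold OnPath at hpath
    have hutpos : 0 < G.dist t u := hconn.pos_dist_of_ne (fun h => hut h.symm)
    by_cases hus : u = s
    · subst hus; omega
    · have hux : G.dist u x ≤ n := by omega
      have := ih u hu hus (by omega) hux
      have h1 : G.dist t s ≤ G.dist t u + G.dist u s := hconn.dist_triangle
      have h2 : G.dist t x ≤ G.dist t s + G.dist s x := hconn.dist_triangle
      omega

/-- in any connected graph with a threshold-k resolving set, for each
`1 ≤ j ≤ k` there is at most one vertex of the attraction of `s` at distance `j`,
and the attraction of a single sensor has at most `k` vertices. -/
theorem stmt0 (G : SimpleGraph V) (hconn : G.Connected) (k : ℕ) (hk : 1 ≤ k)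
    (S : Set V) (hS : ThresholdResolving G k S) (s : V) (hs : s ∈ S) :
    (∀ j : ℕ, 1 ≤ j → j ≤ k →
      {x : V | x ∉ S ∧ G.dist s x = j ∧
        ∀ t ∈ S, t ≠ s → G.dist t x ≤ k →
          G.dist t x = G.dist t s + G.dist s x}.Subsingleton) ∧
    {x : V | x ∉ S ∧ DirectlyMeasures G k S s x ∧
      (∀ t ∈ S, t ≠ s → ¬ DirectlyMeasures G k S t x) ∧
      ∀ y : V, y ≠ x → y ∉ S → (∀ t ∈ S, t ≠ s → ¬ DirectlyMeasures G k S t y) →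
        dk G k s x ≠ dk G k s y}.ncard ≤ k := by
  have hres := hS.1
  have part1 : ∀ j : ℕ, 1 ≤ j → j ≤ k →
      {x : V | x ∉ S ∧ G.dist s x = j ∧
        ∀ t ∈ S, t ≠ s → G.dist t x ≤ k →
          G.dist t x = G.dist t s + G.dist s x}.Subsingleton := by
    intro j hj1 hjk x hx y hy
    by_contra hne
    obtain ⟨hxS, hxd, hxp⟩ := hx
    obtain ⟨hyS, hyd, hyp⟩ := hy
    obtain ⟨t, ht, hdk⟩ := hres x y hne
    apply hdk
    by_cases hts : t = s
    · subst hts; unfold dk; rw [hxd, hyd]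
    · unfold dk
      by_cases h1 : G.dist t x ≤ k
      · have hx' := hxp t ht hts h1
        have hty : G.dist t y ≤ G.dist t s + G.dist s y := hconn.dist_triangle
        have h2 : G.dist t y ≤ k := by omega
        have hy' := hyp t ht hts h2
        omega
      · by_cases h2 : G.dist t y ≤ k
        · have hy' := hyp t ht hts h2
          have htx : G.dist t x ≤ G.dist t s + G.dist s x := hconn.dist_triangle
          have : G.dist t x ≤ k := by omega
          omega
        · omega
  refine ⟨part1, ?_⟩
  have hmem : ∀ x ∈ {x : V | x ∉ S ∧ DirectlyMeasures G k S s x ∧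
      (∀ t ∈ S, t ≠ s → ¬ DirectlyMeasures G k S t x) ∧
      ∀ y : V, y ≠ x → y ∉ S → (∀ t ∈ S, t ≠ s → ¬ DirectlyMeasures G k S t y) →
        dk G k s x ≠ dk G k s y},
      x ∈ {x : V | x ∉ S ∧ G.dist s x = G.dist s x ∧
        ∀ t ∈ S, t ≠ s → G.dist t x ≤ k →
          G.dist t x = G.dist t s + G.dist s x} ∧ 1 ≤ G.dist s x ∧ G.dist s x ≤ k := by
    intro x hx
    obtain ⟨hxS, hdm, hnt, _⟩ := hx
    have hxs : s ≠ x := fun h => hxS (h ▸ hs)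
    have hpos : 0 < G.dist s x := hconn.pos_dist_of_ne hxs
    refine ⟨⟨hxS, rfl, ?_⟩, hpos, hdm.1⟩
    intro t ht hts htk
    exact aux_path G hconn k S s x hxS hnt (G.dist t x) t ht hts htk le_rfl
  calc {x : V | x ∉ S ∧ DirectlyMeasures G k S s x ∧
      (∀ t ∈ S, t ≠ s → ¬ DirectlyMeasures G k S t x) ∧
      ∀ y : V, y ≠ x → y ∉ S → (∀ t ∈ S, t ≠ s → ¬ DirectlyMeasures G k S t y) →
        dk G k s x ≠ dk G k s y}.ncard
      ≤ (Set.Icc 1 k).ncard := by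
        apply Set.ncard_le_ncard_of_injOn (fun x => G.dist s x)
        · intro a ha
          exact ⟨(hmem a ha).2.1, (hmem a ha).2.2⟩
        · intro a ha b hb hab
          obtain ⟨ha', ha1, hak⟩ := hmem a ha
          obtain ⟨hb', _, _⟩ := hmem b hb
          exact part1 (G.dist s a) ha1 hak ha' ⟨hb'.1, hab.symm, hb'.2.2⟩
    _ = k := by rw [← Finset.coe_Icc, Set.ncard_coe_finset, Nat.card_Icc]; omega
end

section
/- Let T be any tree on n vertices. Then Tmd_1(T) ≥ ⌈(n+1)/3⌉, i.e., the threshold-1 metric dimension (locating-dominating number) of a tree on n vertices is at least ⌈(n+1)/3⌉. -/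
open SimpleGraph Finset

variable {V : Type*}

private lemma aux_support_head? {G : SimpleGraph V} {u v : V} (p : G.Walk u v) :
    p.support.head? = some u := by cases p <;> rfl

/-- If `w` is on a walk `p : u ⤳ v` and `w ≠ u`, then `dist w v + 1 ≤ p.length`. -/
private lemma aux_drop [DecidableEq V] {G : SimpleGraph V} {u v w : V} (p : G.Walk u v)
    (h : w ∈ p.support) (hw : w ≠ u) : G.dist w v + 1 ≤ p.length := by
  have h1 : G.dist w v ≤ (p.dropUntil w h).length := SimpleGraph.dist_le _
  have h2 := congrArg Walk.length (p.take_spec h)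
  rw [Walk.length_append] at h2
  have h3 : 1 ≤ (p.takeUntil w h).length := by
    rcases Nat.eq_zero_or_pos (p.takeUntil w h).length with h0 | h0
    · exact absurd (Walk.eq_of_length_eq_zero h0).symm hw
    · exact h0
  omega

/-- Uniqueness of parents in a tree: two neighbors of `v` that are both strictly
closer to the root `r` must coincide. -/
private lemma parent_unique [DecidableEq V] {G : SimpleGraph V} (hT : G.IsTree) (r : V) {v u1 u2 : V}
    (h1 : G.Adj v u1) (h2 : G.Adj v u2)
    (hd1 : G.dist r u1 < G.dist r v) (hd2 : G.dist r u2 < G.dist r v) : u1 = u2 := by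
  have hc := hT.isConnected
  obtain ⟨p1, hp1, hl1⟩ := hc.exists_path_of_dist u1 r
  obtain ⟨p2, hp2, hl2⟩ := hc.exists_path_of_dist u2 r
  have hv1 : v ∉ p1.support := by
    intro hmem
    have hvr : G.dist v r + 1 ≤ p1.length := aux_drop p1 hmem h1.ne'.symm
    rw [hl1, SimpleGraph.dist_comm (u := u1) (v := r)] at hvr
    rw [SimpleGraph.dist_comm (u := v) (v := r)] at hvr
    omega
  have hv2 : v ∉ p2.support := by
    intro hmem
    have hvr : G.dist v r + 1 ≤ p2.length := aux_drop p2 hmem h2.ne'.symm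
    rw [hl2, SimpleGraph.dist_comm (u := u2) (v := r)] at hvr
    rw [SimpleGraph.dist_comm (u := v) (v := r)] at hvr
    omega
  have heq : Walk.cons h1 p1 = Walk.cons h2 p2 :=
    (hT.existsUnique_path v r).unique (hp1.cons hv1) (hp2.cons hv2)
  have hs : p1.support = p2.support := by
    have h' := congrArg (fun w => Walk.support w) heq
    simp only [Walk.support_cons] at h'
    exact List.tail_eq_of_cons_eq h'
  have e1 : p1.support.head? = some u1 := aux_support_head? p1
  rw [hs, aux_support_head? p2] at e1
  exact (Option.some.inj e1).symm

/-- In a tree, adjacent vertices are at different distances from any root. -/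
private lemma level_ne [DecidableEq V] {G : SimpleGraph V} (hT : G.IsTree) (r : V) {u v : V}
    (h : G.Adj u v) : G.dist r u ≠ G.dist r v := by
  intro hEq
  have hc := hT.isConnected
  obtain ⟨p1, hp1, hl1⟩ := hc.exists_path_of_dist u r
  obtain ⟨p2, hp2, hl2⟩ := hc.exists_path_of_dist v r
  have hv1 : v ∉ p1.support := by
    intro hmem
    have hvr : G.dist v r + 1 ≤ p1.length := aux_drop p1 hmem h.ne'
    rw [hl1, SimpleGraph.dist_comm (u := u) (v := r)] at hvr
    rw [SimpleGraph.dist_comm (u := v) (v := r)] at hvr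
    omega
  have heq : Walk.cons h.symm p1 = p2 :=
    (hT.existsUnique_path v r).unique (hp1.cons hv1) hp2
  have hlen := congrArg Walk.length heq
  rw [Walk.length_cons, hl1, hl2, SimpleGraph.dist_comm (u := u) (v := r),
    SimpleGraph.dist_comm (u := v) (v := r)] at hlen
  omega

/-- Main counting bound: any threshold-1 resolving set of a tree on `n` vertices
has at least `(n+1)/3` elements. -/
private lemma main_bound [Fintype V] {G : SimpleGraph V} (hT : G.IsTree) (S : Finset V)
    (hS : ThresholdResolving G 1 ↑S) : Fintype.card V + 1 ≤ 3 * S.card := by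
  classical
  have hc := hT.isConnected
  have hne : Nonempty V := hc.nonempty
  obtain ⟨v0⟩ := hne
  obtain ⟨r, hrS, -⟩ := hS.2 v0
  have hrS' : r ∈ S := hrS
  set code : V → Finset V := fun x => S.filter (fun s => G.Adj s x) with hcode
  have hcode_sub : ∀ x, code x ⊆ S := fun x => Finset.filter_subset _ _
  -- nonemptiness of codes of non-sensor vertices
  have hcode_ne : ∀ x ∉ S, (code x).Nonempty := by
    intro x hx
    obtain ⟨s, hs, hd⟩ := hS.2 x
    have hs' : s ∈ S := hs
    have hsx : s ≠ x := fun h => hx (h ▸ hs')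
    have hpos : 0 < G.dist s x := hc.pos_dist_of_ne hsx
    have hd1 : G.dist s x = 1 := by omega
    exact ⟨s, Finset.mem_filter.mpr ⟨hs', (SimpleGraph.dist_eq_one_iff_adj).mp hd1⟩⟩
  -- characterization of dk for non-sensor vertices
  have hdk : ∀ s ∈ S, ∀ x ∉ S, (dk G 1 s x = 1 ↔ s ∈ code x) := by
    intro s hs x hx
    have hsx : s ≠ x := fun h => hx (h ▸ hs)
    have hpos : 0 < G.dist s x := hc.pos_dist_of_ne hsx
    constructor
    · intro h
      have hd1 : G.dist s x = 1 := by
        unfold dk at h; omega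
      exact Finset.mem_filter.mpr ⟨hs, (SimpleGraph.dist_eq_one_iff_adj).mp hd1⟩
    · intro h
      have hadj := (Finset.mem_filter.mp h).2
      have hd1 : G.dist s x = 1 := (SimpleGraph.dist_eq_one_iff_adj).mpr hadj
      unfold dk; omega
  have hdkb : ∀ s ∈ S, ∀ x ∉ S, 1 ≤ dk G 1 s x ∧ dk G 1 s x ≤ 2 := by
    intro s hs x hx
    have hsx : s ≠ x := fun h => hx (h ▸ hs)
    have hpos : 0 < G.dist s x := hc.pos_dist_of_ne hsx
    unfold dk; omega
  -- codes distinguish non-sensor vertices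
  have hcode_inj : ∀ x ∉ S, ∀ y ∉ S, code x = code y → x = y := by
    intro x hx y hy hxy
    by_contra hne2
    obtain ⟨s, hs, hd⟩ := hS.1 x y hne2
    have hs' : s ∈ S := hs
    have hiff : dk G 1 s x = 1 ↔ dk G 1 s y = 1 := by
      rw [hdk s hs' x hx, hdk s hs' y hy, hxy]
    obtain ⟨hbx1, hbx2⟩ := hdkb s hs' x hx
    obtain ⟨hby1, hby2⟩ := hdkb s hs' y hy
    rcases Nat.lt_or_ge (dk G 1 s x) 2 with h1 | h1
    · have hx1 : dk G 1 s x = 1 := by omega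
      have hy1 : dk G 1 s y = 1 := hiff.mp hx1
      exact hd (hx1.trans hy1.symm)
    · have hx2 : dk G 1 s x = 2 := by omega
      have hy2 : dk G 1 s y = 2 := by
        rcases Nat.lt_or_ge (dk G 1 s y) 2 with h2 | h2
        · have hy1 : dk G 1 s y = 1 := by omega
          have := hiff.mpr hy1
          omega
        · omega
      exact hd (hx2.trans hy2.symm)
  set X : Finset V := Finset.univ \ S with hX
  have hXmem : ∀ x ∈ X, x ∉ S := by
    intro x hx
    exact (Finset.mem_sdiff.mp hx).2
  set P : V → Prop := fun x => (code x).card ≤ 1 with hP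
  have hsplit : (X.filter P).card + (X.filter (fun x => ¬ P x)).card = X.card :=
    Finset.card_filter_add_card_filter_not _
  -- bound on X1 (unique sensor neighbor)
  have hX1 : (X.filter P).card ≤ S.card := by
    set pick : V → V := fun x =>
      if h : (code x).Nonempty then h.choose else x with hpick
    have pick_mem : ∀ x ∉ S, pick x ∈ code x := by
      intro x hx
      have h := hcode_ne x hx
      simp only [hpick, dif_pos h]
      exact h.choose_spec
    have pick_single : ∀ x ∈ X.filter P, code x = {pick x} := by
      intro x hx
      obtain ⟨hxX, hxP⟩ := Finset.mem_filter.mp hx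
      have hx' := hXmem x hxX
      have hm := pick_mem x hx'
      apply Finset.eq_singleton_iff_unique_mem.mpr
      refine ⟨hm, fun y hy => ?_⟩
      exact Finset.card_le_one.mp hxP y hy (pick x) hm
    apply Finset.card_le_card_of_injOn pick
    · intro x hx
      exact hcode_sub x (pick_mem x (hXmem x (Finset.mem_filter.mp hx).1))
    · intro x hx y hy hpq
      apply hcode_inj x (hXmem x (Finset.mem_filter.mp hx).1)
        y (hXmem y (Finset.mem_filter.mp hy).1)
      rw [pick_single x hx, pick_single y hy, hpq]
  -- bound on X2 (at least two sensor neighbors): inject into S.erase r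
  have hX2 : (X.filter (fun x => ¬ P x)).card ≤ (S.erase r).card := by
    have child_ex : ∀ x ∈ X.filter (fun x => ¬ P x),
        ∃ s ∈ code x, G.dist r x < G.dist r s := by
      intro x hx
      obtain ⟨hxX, hxP⟩ := Finset.mem_filter.mp hx
      have h2 : 1 < (code x).card := by
        simp only [hP, not_le] at hxP
        exact hxP
      obtain ⟨s1, hs1, s2, hs2, hne12⟩ := Finset.one_lt_card.mp h2
      have ha1 : G.Adj s1 x := (Finset.mem_filter.mp hs1).2
      have ha2 : G.Adj s2 x := (Finset.mem_filter.mp hs2).2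
      have hn1 : G.dist r s1 ≠ G.dist r x := level_ne hT r ha1
      have hn2 : G.dist r s2 ≠ G.dist r x := level_ne hT r ha2
      rcases Nat.lt_or_ge (G.dist r x) (G.dist r s1) with h | h
      · exact ⟨s1, hs1, h⟩
      rcases Nat.lt_or_ge (G.dist r x) (G.dist r s2) with h' | h'
      · exact ⟨s2, hs2, h'⟩
      exact absurd (parent_unique hT r ha1.symm ha2.symm (by omega) (by omega)) hne12
    set ch : V → V := fun x =>
      if h : ∃ s ∈ code x, G.dist r x < G.dist r s then h.choose else x with hch
    have ch_spec : ∀ x ∈ X.filter (fun x => ¬ P x),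
        ch x ∈ code x ∧ G.dist r x < G.dist r (ch x) := by
      intro x hx
      have h := child_ex x hx
      simp only [hch, dif_pos h]
      exact ⟨h.choose_spec.1, h.choose_spec.2⟩
    apply Finset.card_le_card_of_injOn ch
    · intro x hx
      obtain ⟨hmem, hlt⟩ := ch_spec x hx
      apply Finset.mem_erase.mpr
      constructor
      · intro h
        rw [h, SimpleGraph.dist_self] at hlt
        omega
      · exact hcode_sub x hmem
    · intro x hx y hy hxy
      obtain ⟨hmx, hlx⟩ := ch_spec x hx
      obtain ⟨hmy, hly⟩ := ch_spec y hy
      have hax : G.Adj (ch x) x := (Finset.mem_filter.mp hmx).2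
      have hay : G.Adj (ch y) y := (Finset.mem_filter.mp hmy).2
      rw [hxy] at hax hlx
      exact parent_unique hT r hax hay hlx hly
  have hcXS : X.card = Fintype.card V - S.card := by
    rw [hX, Finset.card_sdiff_of_subset (Finset.subset_univ S), Finset.card_univ]
  have hSle : S.card ≤ Fintype.card V := Finset.card_le_univ S
  have hSpos : 0 < S.card := Finset.card_pos.mpr ⟨r, hrS'⟩
  have herase : (S.erase r).card = S.card - 1 := Finset.card_erase_of_mem hrS'
  omega

/-- lower bound on the locating-dominating number of a tree. -/
theorem stmt2 (G : SimpleGraph V) [Fintype V] (hT : G.IsTree) :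
    ⌈((Fintype.card V : ℚ) + 1) / 3⌉₊ ≤ Tmd G 1 := by
  classical
  have hc := hT.isConnected
  have hnonempty : {m | ∃ S : Finset V, ThresholdResolving G 1 ↑S ∧ S.card = m}.Nonempty := by
    refine ⟨Finset.univ.card, Finset.univ, ⟨?_, ?_⟩, rfl⟩
    · intro x y hxy
      refine ⟨x, by simp, ?_⟩
      have h0 : dk G 1 x x = 0 := by simp [dk]
      have h1 : dk G 1 x y ≠ 0 := by
        have := hc.pos_dist_of_ne hxy
        unfold dk; omega
      omega
    · intro x
      exact ⟨x, by simp, by rw [SimpleGraph.dist_self]; omega⟩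
  have hmem := Nat.sInf_mem hnonempty
  obtain ⟨S, hS, hcard⟩ := hmem
  have hb := main_bound hT S hS
  have hTmd : Tmd G 1 = S.card := hcard.symm
  rw [hTmd, Nat.ceil_le, div_le_iff₀ (by norm_num : (0:ℚ) < 3)]
  have : (Fintype.card V : ℚ) + 1 ≤ 3 * S.card := by exact_mod_cast hb
  linarith
end

section
/- Let T be a tree with a threshold-k resolving set S, let s, s' ∈ S be distinct sensors, and let x, x' be vertices not in {s, s'} such that d(s,x) ≤ k and d(s',x') ≤ k. Define the type of a vertex v with respect to (s,s') as typ(v) = (d(v,s) − d(v,s') + d(s,s'))/2. If typ(x) ≠ typ(x'), then at least one of s, s' distinguishes x and x', i.e., d_k(s,x) ≠ d_k(s,x') or d_k(s',x) ≠ d_k(s',x'). -/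
open SimpleGraph Finset

variable {V : Type*}

/-- if two measured vertices have different types with respect to a
sensor pair, then one of the two sensors distinguishes them. -/
theorem stmt4 (G : SimpleGraph V) (hT : G.IsTree) (k : ℕ) (hk : 1 ≤ k)
    (S : Set V) (hS : ThresholdResolving G k S) (s s' : V) (hs : s ∈ S) (hs' : s' ∈ S)
    (hne : s ≠ s') (x x' : V)
    (hx : x ≠ s ∧ x ≠ s') (hx' : x' ≠ s ∧ x' ≠ s')
    (hmx : G.dist s x ≤ k) (hmx' : G.dist s' x' ≤ k)
    (htyp : typ G s s' x ≠ typ G s s' x') :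
    dk G k s x ≠ dk G k s x' ∨ dk G k s' x ≠ dk G k s' x' := by
  by_contra h
  push_neg at h
  obtain ⟨h1, h2⟩ := h
  apply htyp
  unfold dk at h1 h2
  have e1 : G.dist s x' = G.dist s x := by
    rcases min_cases (G.dist s x') (k+1) with ⟨hm, _⟩ | ⟨hm, _⟩ <;>
      rcases min_cases (G.dist s x) (k+1) with ⟨hm', _⟩ | ⟨hm', _⟩ <;> omega
  have e2 : G.dist s' x = G.dist s' x' := by
    rcases min_cases (G.dist s' x) (k+1) with ⟨hm, _⟩ | ⟨hm, _⟩ <;>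
      rcases min_cases (G.dist s' x') (k+1) with ⟨hm', _⟩ | ⟨hm', _⟩ <;> omega
  unfold typ
  rw [G.dist_comm (u := x) (v := s), G.dist_comm (u := x) (v := s'),
    G.dist_comm (u := x') (v := s), G.dist_comm (u := x') (v := s'), e1, e2]
end

section
/- Fix k ≥ 1 and an integer d with 1 ≤ d ≤ k+1. Then Σ_{i=1}^{d} (1 + min{k−i, k−(d+1−i)}) equals dk − 3d²/4 + d/2 if d is even, and dk − 3d²/4 + d/2 + 1/4 if d is odd. Moreover, the maximum of this sum over all integers d ≥ 1 is (k²+k+1)/3 if k ≡ 1 (mod 3) and (k²+k)/3 otherwise, attained at d = 2k/3 for k ≡ 0 (mod 3), at d = (2k+1)/3 for k ≡ 1 (mod 3), and at d = (2k+2)/3 for k ≡ 2 (mod 3). -/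
open SimpleGraph Finset

variable {V : Type*}

/-!
Shifting the index by one shows that passing from `d` to `d + 2` lowers each of the `d`
middle terms by one and adds the two boundary terms `k - d - 1`; this recursion gives the
closed form `F(d)`.  Since `12 · F(d) = (2k+1)² - (3d-2k-1)² + 3·[d odd]`, the maximum comes
from making `3d - 2k - 1` as small as the residue of `k` modulo 3 and the parity of `d` allow.
-/

def attractionSum (k d : ℕ) : ℚ :=
  ∑ i ∈ Icc 1 d, (1 + min ((k : ℚ) - (i : ℚ)) ((k : ℚ) - ((d : ℚ) + 1 - (i : ℚ))))

def attractionSumClosedForm (k d : ℕ) : ℚ :=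
  if Even d then (d : ℚ) * k - 3 * (d : ℚ) ^ 2 / 4 + (d : ℚ) / 2
  else (d : ℚ) * k - 3 * (d : ℚ) ^ 2 / 4 + (d : ℚ) / 2 + 1 / 4

def maxAttractionSum (k : ℕ) : ℚ :=
  if k % 3 = 1 then ((k : ℚ) ^ 2 + k + 1) / 3 else ((k : ℚ) ^ 2 + k) / 3

def optimalPathLength (k : ℕ) : ℕ :=
  if k % 3 = 0 then 2 * k / 3 else if k % 3 = 1 then (2 * k + 1) / 3 else (2 * k + 2) / 3

lemma attractionSum_eq_sum_range (k d : ℕ) :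
    attractionSum k d =
      ∑ i ∈ range d, (1 + min ((k : ℚ) - (i + 1)) ((k : ℚ) - (d - i))) := by
  rw [attractionSum, ← Ico_add_one_right_eq_Icc, sum_Ico_eq_sum_range]
  refine sum_congr (by simp) fun i _ => ?_
  push_cast
  ring_nf

lemma attractionSum_add_two (k d : ℕ) :
    attractionSum k (d + 2) = attractionSum k d + 2 * k - 3 * d - 2 := by
  have middle : ∀ i ∈ range d,
      1 + min ((k : ℚ) - ((i + 1 : ℕ) + 1)) ((k : ℚ) - ((d + 2 : ℕ) - (i + 1 : ℕ))) =
        (1 + min ((k : ℚ) - (i + 1)) ((k : ℚ) - (d - i))) - 1 := by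
    intro i _
    push_cast
    rw [show (k : ℚ) - (i + 1 + 1) = (k - (i + 1)) - 1 by ring,
      show (k : ℚ) - (d + 2 - (i + 1)) = (k - (d - i)) - 1 by ring, min_sub_sub_right]
    ring
  rw [attractionSum_eq_sum_range, attractionSum_eq_sum_range, sum_range_succ, sum_range_succ',
    sum_congr rfl middle, sum_sub_distrib, sum_const, card_range, nsmul_one]
  have hd : (0 : ℚ) ≤ d := d.cast_nonneg
  push_cast
  rw [min_eq_right (by linarith), min_eq_left (by linarith)]
  ring

lemma attractionSumClosedForm_add_two (k d : ℕ) :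
    attractionSumClosedForm k (d + 2) = attractionSumClosedForm k d + 2 * k - 3 * d - 2 := by
  by_cases h : Even d
  · rw [attractionSumClosedForm, attractionSumClosedForm,
      if_pos (by simpa [Nat.even_add] using h), if_pos h]
    push_cast; ring
  · rw [attractionSumClosedForm, attractionSumClosedForm,
      if_neg (by simpa [Nat.even_add] using h), if_neg h]
    push_cast; ring

lemma attractionSum_eq_closedForm (k d : ℕ) :
    attractionSum k d = attractionSumClosedForm k d := by
  induction d using Nat.twoStepInduction with
  | zero => simp [attractionSum, attractionSumClosedForm]
  | one => simp [attractionSum, attractionSumClosedForm]; ring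
  | more d ih _ => rw [attractionSum_add_two, attractionSumClosedForm_add_two, ih]

lemma twelve_mul_attractionSumClosedForm (k d : ℕ) :
    12 * attractionSumClosedForm k d =
      (2 * k + 1) ^ 2 - (3 * d - 2 * k - 1) ^ 2 + if Even d then 0 else 3 := by
  unfold attractionSumClosedForm
  split_ifs <;> ring

/-- Unless `k ≡ 1 [MOD 3]`, `3d - 2k - 1` is prime to 3, and it is even when `d` is odd. -/
lemma le_sq_three_mul_sub_two_mul_sub_one (k d : ℕ) (hk : k % 3 ≠ 1) :
    (if Even d then 1 else 4 : ℚ) ≤ (3 * d - 2 * k - 1) ^ 2 := by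
  have hsq : ∀ n : ℤ, (n ≤ -1 ∨ 1 ≤ n → 1 ≤ n ^ 2) ∧ (n ≤ -2 ∨ 2 ≤ n → 4 ≤ n ^ 2) :=
    fun n => ⟨by rintro (h | h) <;> nlinarith, by rintro (h | h) <;> nlinarith⟩
  split_ifs with hd
  · exact_mod_cast (hsq (3 * d - 2 * k - 1)).1 (by omega)
  · obtain ⟨j, rfl⟩ := Nat.not_even_iff_odd.mp hd
    exact_mod_cast (hsq (3 * (2 * j + 1 : ℕ) - 2 * k - 1)).2 (by push_cast; omega)

lemma attractionSumClosedForm_le (k d : ℕ) :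
    attractionSumClosedForm k d ≤ maxAttractionSum k := by
  suffices 12 * attractionSumClosedForm k d ≤ 12 * maxAttractionSum k by linarith
  rw [twelve_mul_attractionSumClosedForm, maxAttractionSum]
  by_cases hk : k % 3 = 1
  · have := sq_nonneg (3 * (d : ℚ) - 2 * k - 1)
    split_ifs <;> linarith
  · have := le_sq_three_mul_sub_two_mul_sub_one k d hk
    rw [if_neg hk]
    split_ifs at this ⊢ <;> linarith

lemma attractionSumClosedForm_optimalPathLength (k : ℕ) :
    attractionSumClosedForm k (optimalPathLength k) = maxAttractionSum k := by
  obtain ⟨m, r, hr, rfl⟩ : ∃ m r, r < 3 ∧ k = 3 * m + r :=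
    ⟨k / 3, k % 3, k.mod_lt (by norm_num), by omega⟩
  interval_cases r
  · rw [show optimalPathLength (3 * m + 0) = 2 * m by simp [optimalPathLength]; omega,
      attractionSumClosedForm, if_pos (even_two_mul m), maxAttractionSum, if_neg (by omega)]
    push_cast; ring
  · rw [show optimalPathLength (3 * m + 1) = 2 * m + 1 by simp [optimalPathLength]; omega,
      attractionSumClosedForm, if_neg (by simp), maxAttractionSum, if_pos (by omega)]
    push_cast; ring
  · rw [show optimalPathLength (3 * m + 2) = 2 * (m + 1) by simp [optimalPathLength]; omega,
      attractionSumClosedForm, if_pos (even_two_mul _), maxAttractionSum, if_neg (by omega)]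
    push_cast; ring

/-- closed form and maximization of `Σ_{i=1}^{d}(1 + min{k−i, k−(d+1−i)})`. -/
theorem stmt5 (k : ℕ) (hk : 1 ≤ k) :
    (∀ d : ℕ, 1 ≤ d → d ≤ k + 1 →
      (∑ i ∈ Finset.Icc 1 d,
          (1 + min ((k : ℚ) - (i : ℚ)) ((k : ℚ) - ((d : ℚ) + 1 - (i : ℚ))))) =
        (if Even d then (d : ℚ) * k - 3 * (d : ℚ) ^ 2 / 4 + (d : ℚ) / 2
         else (d : ℚ) * k - 3 * (d : ℚ) ^ 2 / 4 + (d : ℚ) / 2 + 1 / 4)) ∧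
    IsGreatest
      {y : ℚ | ∃ d : ℕ, 1 ≤ d ∧
        y = ∑ i ∈ Finset.Icc 1 d,
          (1 + min ((k : ℚ) - (i : ℚ)) ((k : ℚ) - ((d : ℚ) + 1 - (i : ℚ))))}
      (if k % 3 = 1 then ((k : ℚ) ^ 2 + k + 1) / 3 else ((k : ℚ) ^ 2 + k) / 3) ∧
    (∑ i ∈ Finset.Icc 1
        (if k % 3 = 0 then 2 * k / 3 else
          if k % 3 = 1 then (2 * k + 1) / 3 else (2 * k + 2) / 3),
        (1 + min ((k : ℚ) - (i : ℚ))
          ((k : ℚ) - (((if k % 3 = 0 then 2 * k / 3 else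
            if k % 3 = 1 then (2 * k + 1) / 3 else (2 * k + 2) / 3 : ℕ) : ℚ) + 1 - (i : ℚ))))) =
      (if k % 3 = 1 then ((k : ℚ) ^ 2 + k + 1) / 3 else ((k : ℚ) ^ 2 + k) / 3) := by
  have optimal : attractionSum k (optimalPathLength k) = maxAttractionSum k := by
    rw [attractionSum_eq_closedForm, attractionSumClosedForm_optimalPathLength]
  have optimal_pos : 1 ≤ optimalPathLength k := by
    unfold optimalPathLength; split_ifs <;> omega
  refine ⟨fun d _ _ => attractionSum_eq_closedForm k d, ⟨?_, ?_⟩, optimal⟩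
  · exact ⟨optimalPathLength k, optimal_pos, optimal.symm⟩
  · rintro y ⟨d, -, rfl⟩
    exact (attractionSum_eq_closedForm k d).trans_le (attractionSumClosedForm_le k d)
end

section
/- Let T be a tree in which all sensor paths of a threshold-k resolving set S of size m are pairwise edge-disjoint. Form the multigraph H on vertex set S by joining s₁, s₂ ∈ S with an edge whenever the path P_T(s₁,s₂) is a sensor path (contains no sensor other than its endpoints). Then H is a tree on m vertices, and hence T has exactly m − 1 sensor paths. -/
open SimpleGraph Finset

variable {V : Type*}

/-!
In a tree the first edge `e = σc` of the path from `σ` to `τ` separates `σ` from `τ`.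
If the sensor graph `H` contains an edge `στ`, every other edge `xy` of `H` comes from a
sensor path avoiding `e`, so `x` and `y` stay connected in `T - e`. Hence a walk from `σ`
to `τ` in `H - στ` would reconnect `σ` and `τ` in `T - e`: every edge of `H` is a bridge.
Connectivity of `H` follows by induction on the distance, splitting a non-sensor path at
an intermediate sensor. A tree on `m` vertices has `m - 1` edges.
-/

namespace SimpleGraph

variable {G : SimpleGraph V}

namespace IsAcyclic

theorem length_eq_dist_of_isPath (hG : G.IsAcyclic) {u v : V} {p : G.Walk u v} (hp : p.IsPath) :
    p.length = G.dist u v := by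
  obtain ⟨q, hq, hq_len⟩ := p.reachable.exists_path_of_dist
  have hpq : p = q := congrArg Subtype.val ((hG.subsingleton_path u v).elim ⟨p, hp⟩ ⟨q, hq⟩)
  rw [hpq, hq_len]

theorem onPath_of_mem_support (hG : G.IsAcyclic) {u v w : V} {p : G.Walk u v} (hp : p.IsPath)
    (hw : w ∈ p.support) : OnPath G u v w := by
  classical
  have h_take := hG.length_eq_dist_of_isPath (hp.takeUntil hw)
  have h_drop := hG.length_eq_dist_of_isPath (hp.dropUntil hw)
  have h_split := congrArg Walk.length (p.take_spec hw)
  rw [Walk.length_append] at h_split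
  unfold OnPath
  rw [← h_take, ← h_drop, h_split, hG.length_eq_dist_of_isPath hp]

theorem edgeOnPath_of_mem_edges (hG : G.IsAcyclic) {u v a b : V} {p : G.Walk u v}
    (hp : p.IsPath) (he : s(a, b) ∈ p.edges) : EdgeOnPath G u v a b :=
  ⟨p.adj_of_mem_edges he, hG.onPath_of_mem_support hp (p.fst_mem_support_of_mem_edges he),
    hG.onPath_of_mem_support hp (p.snd_mem_support_of_mem_edges he)⟩

theorem reachable_deleteEdges_of_not_edgeOnPath (hG : G.IsAcyclic) {u v a b : V}
    (hr : G.Reachable u v) (h : ¬ EdgeOnPath G u v a b) :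
    (G.deleteEdges {s(a, b)}).Reachable u v := by
  obtain ⟨p, hp, -⟩ := hr.exists_path_of_dist
  exact reachable_deleteEdges_iff_exists_walk.2
    ⟨p, fun he ↦ h (hG.edgeOnPath_of_mem_edges hp he)⟩

theorem not_reachable_deleteEdges_of_mem_edges (hG : G.IsAcyclic) {u v : V} {p : G.Walk u v}
    (hp : p.IsPath) {a b : V} (he : s(a, b) ∈ p.edges) :
    ¬ (G.deleteEdges {s(a, b)}).Reachable u v := by
  classical
  rw [reachable_deleteEdges_iff_exists_walk]
  rintro ⟨q, hq⟩
  have hqp : q.bypass = p :=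
    congrArg Subtype.val ((hG.subsingleton_path u v).elim ⟨_, q.bypass_isPath⟩ ⟨p, hp⟩)
  exact hq (q.edges_bypass_subset_edges (hqp ▸ he))

end IsAcyclic

def SensorPathsEdgeDisjoint (G : SimpleGraph V) (S : Set V) : Prop :=
  ∀ s₁ s₂ s₃ s₄ : V, SensorPath G S s₁ s₂ → SensorPath G S s₃ s₄ →
    ({s₁, s₂} : Set V) ≠ {s₃, s₄} →
    ∀ a b : V, ¬ (EdgeOnPath G s₁ s₂ a b ∧ EdgeOnPath G s₃ s₄ a b)

variable {S : Set V} {H : SimpleGraph S}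

theorem Connected.preconnected_of_sensorPath_adj (hG : G.Connected)
    (hH : ∀ a b : S, SensorPath G S a b → H.Adj a b) : H.Preconnected := by
  intro σ τ
  induction hd : G.dist (σ : V) τ using Nat.strong_induction_on generalizing σ τ with
  | _ n ih =>
  by_cases hστ : σ = τ
  · exact hστ ▸ .rfl
  by_cases hsp : SensorPath G S σ τ
  · exact (hH σ τ hsp).reachable
  obtain ⟨t, htS, hon, htσ, htτ⟩ : ∃ t ∈ S, OnPath G σ τ t ∧ t ≠ σ ∧ t ≠ τ := by
    simpa [SensorPath, Subtype.coe_ne_coe.2 hστ] using hsp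
  have hσt := hG.pos_dist_of_ne htσ.symm
  have htτ := hG.pos_dist_of_ne htτ
  unfold OnPath at hon
  exact (ih (G.dist (σ : V) t) (by omega) σ ⟨t, htS⟩ rfl).trans
    (ih (G.dist t τ) (by omega) ⟨t, htS⟩ τ rfl)

theorem IsTree.reachable_deleteEdges_of_reachable (hG : G.IsTree) {a b : V}
    (hH : ∀ x y : S, H.Adj x y → ¬ EdgeOnPath G x y a b) {x y : S} (h : H.Reachable x y) :
    (G.deleteEdges {s(a, b)}).Reachable x y := by
  obtain ⟨w⟩ := h
  induction w with
  | nil => rfl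
  | cons hxy _ ih =>
    exact (hG.isAcyclic.reachable_deleteEdges_of_not_edgeOnPath (hG.connected _ _)
      (hH _ _ hxy)).trans ih

theorem IsTree.isAcyclic_of_sensorPathsEdgeDisjoint (hG : G.IsTree)
    (hdisj : SensorPathsEdgeDisjoint G S) (hH : ∀ a b : S, H.Adj a b → SensorPath G S a b) :
    H.IsAcyclic := by
  refine isAcyclic_iff_forall_adj_isBridge.2 fun σ τ hστ ↦ isBridge_iff.2 fun hreach ↦ ?_
  obtain ⟨p, hp, -⟩ := hG.connected.exists_path_of_dist (σ : V) τ
  obtain ⟨c, hc, q, rfl⟩ := p.exists_eq_cons_of_ne (hH σ τ hστ).1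
  have he : s((σ : V), c) ∈ (Walk.cons hc q).edges := by simp
  refine hG.isAcyclic.not_reachable_deleteEdges_of_mem_edges hp he
    (hG.reachable_deleteEdges_of_reachable ?_ hreach)
  rintro x y hxy hon
  rw [deleteEdges_adj, Set.mem_singleton_iff] at hxy
  refine hdisj x y σ τ (hH x y hxy.1) (hH σ τ hστ) (fun hpair ↦ hxy.2 ?_) σ c
    ⟨hon, hG.isAcyclic.edgeOnPath_of_mem_edges hp he⟩
  rcases Set.pair_eq_pair_iff.1 hpair with ⟨hxσ, hyτ⟩ | ⟨hxτ, hyσ⟩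
  · rw [Subtype.ext hxσ, Subtype.ext hyτ]
  · rw [Subtype.ext hxτ, Subtype.ext hyσ, Sym2.eq_swap]

end SimpleGraph

theorem stmt6_general (G : SimpleGraph V) [Fintype V] (hT : G.IsTree)
    (k : ℕ) (S : Set V) (hS : ThresholdResolving G k S)
    (m : ℕ) (hm : S.ncard = m)
    (hdisj : ∀ s₁ s₂ s₃ s₄ : V, SensorPath G S s₁ s₂ → SensorPath G S s₃ s₄ →
      ({s₁, s₂} : Set V) ≠ {s₃, s₄} →
      ∀ a b : V, ¬ (EdgeOnPath G s₁ s₂ a b ∧ EdgeOnPath G s₃ s₄ a b))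
    (H : SimpleGraph S)
    (hH : ∀ a b : S, H.Adj a b ↔ SensorPath G S (a : V) (b : V)) :
    H.IsTree ∧ H.edgeSet.ncard = m - 1 := by
  have : Nonempty S := by
    obtain ⟨v⟩ := hT.connected.nonempty
    obtain ⟨s, hs, -⟩ := hS.2 v
    exact ⟨⟨s, hs⟩⟩
  have hHT : H.IsTree :=
    ⟨⟨hT.connected.preconnected_of_sensorPath_adj fun a b ↦ (hH a b).2⟩,
      hT.isAcyclic_of_sensorPathsEdgeDisjoint hdisj fun a b ↦ (hH a b).1⟩
  have hcard := (isTree_iff_connected_and_card.1 hHT).2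
  rw [Nat.card_coe_set_eq, Nat.card_coe_set_eq] at hcard
  exact ⟨hHT, by omega⟩

/-- contracting the pairwise edge-disjoint sensor paths of a tree yields
a tree on the `m` sensors; hence there are exactly `m − 1` sensor paths. -/
theorem stmt6 (G : SimpleGraph V) [Fintype V] [DecidableEq V] (hT : G.IsTree)
    (k : ℕ) (hk : 1 ≤ k) (S : Set V) (hS : ThresholdResolving G k S)
    (m : ℕ) (hm : S.ncard = m)
    (hdisj : ∀ s₁ s₂ s₃ s₄ : V, SensorPath G S s₁ s₂ → SensorPath G S s₃ s₄ →
      ({s₁, s₂} : Set V) ≠ {s₃, s₄} →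
      ∀ a b : V, ¬ (EdgeOnPath G s₁ s₂ a b ∧ EdgeOnPath G s₃ s₄ a b))
    (H : SimpleGraph S)
    (hH : ∀ a b : S, H.Adj a b ↔ SensorPath G S (a : V) (b : V)) :
    H.IsTree ∧ H.edgeSet.ncard = m - 1 :=
  stmt6_general G hT k S hS m hm hdisj H hH
end

section
/- Let T be a tree with threshold-k resolving set S, and let v be a vertex of degree ≥ 3 from which at least two leaf-paths emanate. Suppose P is one of these leaf-paths, with vertices v, x₁, …, x_ℓ in order (x_ℓ a leaf), and ℓ ∈ [2k+2, 3k+1]. Then V(P) \ {v} contains at least 2 sensors of S. -/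
open SimpleGraph Finset

variable {V : Type*}

private lemma tree_walk_length [DecidableEq V] {G : SimpleGraph V} (hT : G.IsTree) {x y : V}
    (w : G.Walk x y) (hw : w.IsPath) : w.length = G.dist x y := by
  obtain ⟨qw, hqw⟩ := hT.isConnected.exists_walk_length_eq_dist x y
  have h1 : qw.bypass.IsPath := qw.bypass_isPath
  obtain ⟨u, -, hu⟩ := hT.existsUnique_path x y
  have h2 : w = qw.bypass := (hu w hw).trans (hu qw.bypass h1).symm
  have h3 : qw.bypass.length ≤ qw.length := qw.length_bypass_le
  have h4 : G.dist x y ≤ w.length := SimpleGraph.dist_le w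
  have h5 : w.length = qw.bypass.length := by rw [h2]
  omega

/-- a leaf-path of length in `[2k+2, 3k+1]` emanating from a support
vertex contains at least two sensors off the support vertex. -/
theorem stmt8 (G : SimpleGraph V) [Fintype V] [DecidableEq V] [DecidableRel G.Adj]
    (hT : G.IsTree) (k : ℕ) (hk : 1 ≤ k) (S : Set V) (hS : ThresholdResolving G k S)
    (v : V) (l : ℕ) (p : Fin (l + 1) → V) (hp : IsLeafPath G v l p)
    (hother : ∃ (l' : ℕ) (p' : Fin (l' + 1) → V),
      IsLeafPath G v l' p' ∧ Set.range p' ≠ Set.range p)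
    (h1 : 2 * k + 2 ≤ l) (h2 : l ≤ 3 * k + 1) :
    2 ≤ (S ∩ (Set.range p \ {v})).ncard := by
  obtain ⟨hinj, hp0, hdeg3, hadj, hleaf, hdeg2⟩ := hp
  -- the chain function
  obtain ⟨q, hq0, hqp, hqinj, hqadj⟩ :
      ∃ q : ℕ → V, q 0 = v ∧ (∀ m, ∀ hm : m ≤ l, q m = p ⟨m, by omega⟩) ∧
        (∀ a b, a ≤ l → b ≤ l → q a = q b → a = b) ∧
        (∀ n, n < l → G.Adj (q n) (q (n+1))) := by
    refine ⟨fun n => p ⟨min n l, by omega⟩, ?_, fun m hm => ?_, fun a b ha hb h => ?_,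
      fun n hn => ?_⟩
    · beta_reduce
      rw [show (⟨min 0 l, by omega⟩ : Fin (l+1)) = 0 from Fin.ext (by simp)]
      exact hp0
    · exact congrArg p (Fin.ext (by simpa using Nat.min_eq_left hm))
    · have h2 : min a l = min b l := by simpa using congrArg Fin.val (hinj h)
      omega
    · have e1 : (⟨min n l, by omega⟩ : Fin (l+1)) = (⟨n, hn⟩ : Fin l).castSucc :=
        Fin.ext (by simp [Nat.min_eq_left (le_of_lt hn)])
      have e2 : (⟨min (n+1) l, by omega⟩ : Fin (l+1)) = (⟨n, hn⟩ : Fin l).succ :=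
        Fin.ext (by simp [Nat.min_eq_left hn])
      beta_reduce
      rw [e1, e2]
      exact hadj _
  have hleaf' : G.degree (q l) = 1 := by rw [hqp l le_rfl]; exact hleaf
  have hdeg2' : ∀ m, 1 ≤ m → m < l → G.degree (q m) = 2 := by
    intro m hm1 hm2
    rw [hqp m (by omega)]
    exact hdeg2 ⟨m, by omega⟩ (by simpa using (by omega : m ≠ 0))
      (by simpa using (by omega : m ≠ l))
  -- walks along the chain
  have hwalk : ∀ n a b, a ≤ b → b ≤ l → b - a = n →
      ∃ w : G.Walk (q a) (q b), w.IsPath ∧ w.length = n ∧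
        ∀ u ∈ w.support, ∃ m, a ≤ m ∧ m ≤ b ∧ u = q m := by
    intro n
    induction n with
    | zero =>
      intro a b hab hbl hn
      have : a = b := by omega
      subst this
      refine ⟨Walk.nil, Walk.IsPath.nil, by simp, ?_⟩
      intro u hu
      rw [Walk.support_nil] at hu
      exact ⟨a, le_rfl, le_rfl, (List.mem_singleton.mp hu)⟩
    | succ n ih =>
      intro a b hab hbl hn
      obtain ⟨w, hw1, hw2, hw3⟩ := ih (a+1) b (by omega) hbl (by omega)
      refine ⟨Walk.cons (hqadj a (by omega)) w, ?_, by simp [hw2], ?_⟩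
      · rw [Walk.cons_isPath_iff]
        refine ⟨hw1, fun hmem => ?_⟩
        obtain ⟨m', hm1, hm2, hm3⟩ := hw3 _ hmem
        have := hqinj a m' (by omega) (by omega) hm3
        omega
      · intro u hu
        rw [Walk.support_cons] at hu
        rcases List.mem_cons.mp hu with hu | hu
        · exact ⟨a, le_rfl, by omega, hu⟩
        · obtain ⟨m', hm1, hm2, hm3⟩ := hw3 _ hu
          exact ⟨m', by omega, hm2, hm3⟩
  have hdist : ∀ a b, a ≤ b → b ≤ l → G.dist (q a) (q b) = b - a := by
    intro a b hab hbl
    obtain ⟨w, hw1, hw2, -⟩ := hwalk (b - a) a b hab hbl rfl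
    rw [← tree_walk_length hT w hw1, hw2]
  -- neighbors on the chain
  have hnbr : ∀ j u, 1 ≤ j → j ≤ l → G.Adj (q j) u →
      u = q (j-1) ∨ (j < l ∧ u = q (j+1)) := by
    intro j u hj1 hjl hadju
    have hprev : G.Adj (q j) (q (j-1)) := by
      have h := hqadj (j-1) (by omega)
      rw [show j - 1 + 1 = j from by omega] at h
      exact h.symm
    by_cases hjl' : j < l
    · by_contra hcon2
      push_neg at hcon2
      obtain ⟨hu1, hu2'⟩ := hcon2
      have hu2 : u ≠ q (j+1) := hu2' hjl'
      have hnext : G.Adj (q j) (q (j+1)) := hqadj j hjl'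
      have hne12 : q (j-1) ≠ q (j+1) := fun h => by
        have := hqinj _ _ (by omega) (by omega) h; omega
      have hsub : ({q (j-1), q (j+1), u} : Finset V) ⊆ G.neighborFinset (q j) := by
        intro x hx
        rw [SimpleGraph.mem_neighborFinset]
        simp only [Finset.mem_insert, Finset.mem_singleton] at hx
        rcases hx with rfl | rfl | rfl
        exacts [hprev, hnext, hadju]
      have hcard : ({q (j-1), q (j+1), u} : Finset V).card = 3 := by
        rw [Finset.card_insert_of_notMem (by simp [hne12, Ne.symm hu1]),
          Finset.card_insert_of_notMem (by simp [Ne.symm hu2]), Finset.card_singleton]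
      have hle := Finset.card_le_card hsub
      rw [hcard, SimpleGraph.card_neighborFinset_eq_degree, hdeg2' j hj1 hjl'] at hle
      omega
    · have hjl2 : j = l := by omega
      subst hjl2
      left
      have hcard : (G.neighborFinset (q j)).card ≤ 1 := by
        rw [SimpleGraph.card_neighborFinset_eq_degree, hleaf']
      exact Finset.card_le_one.mp hcard u (by rwa [SimpleGraph.mem_neighborFinset]) _
        (by rw [SimpleGraph.mem_neighborFinset]; exact hprev)
  -- v is a cutvertex
  have hcut : ∀ (x y : V) (w : G.Walk x y), v ∉ w.support →
      ∀ j, 1 ≤ j → j ≤ l → x = q j → ∃ m, 1 ≤ m ∧ m ≤ l ∧ y = q m := by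
    intro x y w
    induction w with
    | nil => exact fun _ j hj1 hjl hx => ⟨j, hj1, hjl, hx⟩
    | @cons a b c hab w' ih =>
      intro hv j hj1 hjl hx
      rw [Walk.support_cons] at hv
      simp only [List.mem_cons, not_or] at hv
      subst hx
      have hbv : b ≠ v := fun h => hv.2 (h ▸ w'.start_mem_support)
      rcases hnbr j b hj1 hjl hab with hb | ⟨hjl', hb⟩
      · have hj2 : 2 ≤ j := by
          by_contra hcon2
          apply hbv
          have hj : j - 1 = 0 := by omega
          rw [hb, hj, hq0]
        exact ih hv.2 (j-1) (by omega) (by omega) hb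
      · exact ih hv.2 (j+1) (by omega) (by omega) hb
  -- sensors off the tail are far from it
  have hrange : ∀ t, t ∉ Set.range p \ {v} → ∀ m, 1 ≤ m → m ≤ l → t ≠ q m := by
    intro t ht m hm1 hm2 h
    apply ht
    refine ⟨⟨⟨m, by omega⟩, ?_⟩, ?_⟩
    · rw [← hqp m hm2, ← h]
    · simp only [Set.mem_singleton_iff]
      intro h'
      have := hqinj m 0 hm2 (by omega) (by rw [← h, h', hq0])
      omega
  have hfar : ∀ t, t ∉ Set.range p \ {v} → ∀ j, 1 ≤ j → j ≤ l → j ≤ G.dist t (q j) := by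
    intro t ht j hj1 hjl
    obtain ⟨w, hw⟩ := hT.isConnected.exists_walk_length_eq_dist (q j) t
    rw [show G.dist t (q j) = G.dist (q j) t from SimpleGraph.dist_comm, ← hw]
    by_cases hv : v ∈ w.support
    · have hle1 := SimpleGraph.dist_le (w.takeUntil v hv)
      have hle2 := Walk.length_takeUntil_le w hv
      have h3 : G.dist (q j) v = j := by
        rw [← hq0, show G.dist (q j) (q 0) = G.dist (q 0) (q j) from SimpleGraph.dist_comm]
        simpa using hdist 0 j (Nat.zero_le j) hjl
      omega
    · obtain ⟨m, hm1, hm2, hm3⟩ := hcut (q j) t w hv j hj1 hjl rfl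
      exact absurd hm3 (hrange t ht m hm1 hm2)
  -- main argument
  by_contra hcon
  push_neg at hcon
  have hdomleaf : ∀ t ∈ S, G.dist t (q l) ≤ k → t ∈ Set.range p \ {v} := by
    intro t htS htd
    by_contra h
    have := hfar t h l (by omega) le_rfl
    omega
  have hAne : (S ∩ (Set.range p \ {v})).Nonempty := by
    obtain ⟨t, htS, htd⟩ := hS.2 (q l)
    exact ⟨t, htS, hdomleaf t htS htd⟩
  have hA1 : (S ∩ (Set.range p \ {v})).ncard = 1 := by
    have hpos : 0 < (S ∩ (Set.range p \ {v})).ncard := (Set.ncard_pos (Set.toFinite _)).mpr hAne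
    omega
  obtain ⟨s, hsA⟩ := Set.ncard_eq_one.mp hA1
  have hsmem : s ∈ S ∩ (Set.range p \ {v}) := by rw [hsA]; exact Set.mem_singleton s
  obtain ⟨hsS, hsrange, hsnev⟩ := hsmem
  have hsne_v : s ≠ v := fun h => hsnev (h ▸ Set.mem_singleton v)
  obtain ⟨i, hi1, hi_le, hsq⟩ : ∃ i, 1 ≤ i ∧ i ≤ l ∧ s = q i := by
    obtain ⟨i0, hi0⟩ := hsrange
    refine ⟨(i0 : ℕ), ?_, Nat.lt_succ_iff.mp i0.isLt, ?_⟩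
    · by_contra h
      push_neg at h
      apply hsne_v
      rw [← hi0, ← hp0]
      exact congrArg p (Fin.ext (by simpa using (by omega : (i0 : ℕ) = 0)))
    · rw [hqp _ (Nat.lt_succ_iff.mp i0.isLt), ← hi0]
  have honly : ∀ t ∈ S, t ≠ s → t ∉ Set.range p \ {v} := by
    intro t htS hts h
    apply hts
    have hmem : t ∈ S ∩ (Set.range p \ {v}) := ⟨htS, h⟩
    rw [hsA] at hmem
    exact hmem
  have hik : l ≤ i + k := by
    obtain ⟨t, htS, htd⟩ := hS.2 (q l)
    have hmem := hdomleaf t htS htd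
    have hts : t = s := by
      by_contra h
      exact honly t htS h hmem
    rw [hts, hsq, hdist i l hi_le le_rfl] at htd
    omega
  rcases le_or_gt (2*k+2) i with hcase | hcase
  · -- Case A : deep sensor, q (k+1) is undominated
    obtain ⟨t, htS, htd⟩ := hS.2 (q (k+1))
    by_cases hts : t = s
    · rw [hts, hsq,
        show G.dist (q i) (q (k+1)) = G.dist (q (k+1)) (q i) from SimpleGraph.dist_comm,
        hdist (k+1) i (by omega) hi_le] at htd
      omega
    · have := hfar t (honly t htS hts) (k+1) (by omega) (by omega)
      omega
  · -- Case B : mirror pair around the sensor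
    have hik2 : k + 2 ≤ i := by omega
    set m := min (i - (k+1)) (l - i) with hm
    set a := i - m with ha2
    set b := i + m with hb2
    have hm1 : 1 ≤ m := by omega
    have hka : k + 1 ≤ a := by omega
    have hbl : b ≤ l := by omega
    have hab : a < b := by omega
    have hne : q a ≠ q b := fun h => by
      have := hqinj a b (by omega) hbl h; omega
    obtain ⟨t, htS, htd⟩ := hS.1 (q a) (q b) hne
    apply htd
    by_cases hts : t = s
    · subst hts
      rw [hsq]
      have d1 : G.dist (q i) (q a) = m := by
        rw [show G.dist (q i) (q a) = G.dist (q a) (q i) from SimpleGraph.dist_comm,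
          hdist a i (by omega) hi_le]
        omega
      have d2 : G.dist (q i) (q b) = m := by
        rw [hdist i b (by omega) hbl]
        omega
      simp [dk, d1, d2]
    · have hfa := hfar t (honly t htS hts) a (by omega) (by omega)
      have hfb := hfar t (honly t htS hts) b (by omega) hbl
      simp only [dk]
      rw [min_eq_right (by omega), min_eq_right (by omega)]
end

section
/- Let T be a tree with threshold-k resolving set S, and let v ∈ T be a vertex of degree ≥ 3 with L ≥ 2 leaf-paths P₁, …, P_L emanating from v, all of length at most k (short leaf-paths). Then at least L − 1 of the vertex sets V(P_j) \ {v} contain a sensor of S. -/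
open SimpleGraph Finset

variable {V : Type*}

section Aux

variable {G : SimpleGraph V} [Fintype V] [DecidableEq V] [DecidableRel G.Adj]

lemma adj_step {ℓ : ℕ} {p : Fin (ℓ + 1) → V}
    (hadj : ∀ i : Fin ℓ, G.Adj (p i.castSucc) (p i.succ)) {a : ℕ} (ha : a < ℓ) :
    G.Adj (p ⟨a, by omega⟩) (p ⟨a + 1, by omega⟩) :=
  hadj ⟨a, ha⟩

lemma lp_pos {v : V} {ℓ : ℕ} {p : Fin (ℓ + 1) → V} (h : IsLeafPath G v ℓ p) : 1 ≤ ℓ := by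
  obtain ⟨hinj, h0, hdeg3, hadj, hleaf, hdeg2⟩ := h
  by_contra hcon
  have hl0 : ℓ = 0 := by omega
  subst hl0
  have hL0 : (Fin.last 0 : Fin 1) = 0 := by decide
  rw [hL0, h0] at hleaf
  omega

lemma internal_nbrs {v : V} {ℓ : ℕ} {p : Fin (ℓ + 1) → V} (h : IsLeafPath G v ℓ p)
    {a : ℕ} (ha1 : 1 ≤ a) (ha : a < ℓ) :
    G.neighborFinset (p ⟨a, by omega⟩) = {p ⟨a - 1, by omega⟩, p ⟨a + 1, by omega⟩} := by
  obtain ⟨hinj, h0, hdeg3, hadj, hleaf, hdeg2⟩ := h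
  have e1 : G.Adj (p ⟨a - 1, by omega⟩) (p ⟨a, by omega⟩) := by
    have h' := adj_step hadj (show a - 1 < ℓ by omega)
    have hEq : (⟨a - 1 + 1, by omega⟩ : Fin (ℓ + 1)) = ⟨a, by omega⟩ := by
      simp only [Fin.mk.injEq]; omega
    rwa [hEq] at h'
  have e2 : G.Adj (p ⟨a, by omega⟩) (p ⟨a + 1, by omega⟩) := adj_step hadj ha
  have hdeg : G.degree (p ⟨a, by omega⟩) = 2 :=
    hdeg2 ⟨a, by omega⟩ (show a ≠ 0 by omega) (show a ≠ ℓ by omega)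
  have hne : p ⟨a - 1, by omega⟩ ≠ p ⟨a + 1, by omega⟩ := by
    intro hcon
    have := hinj hcon
    simp only [Fin.mk.injEq] at this
    omega
  have hsub : ({p ⟨a - 1, by omega⟩, p ⟨a + 1, by omega⟩} : Finset V) ⊆
      G.neighborFinset (p ⟨a, by omega⟩) := by
    intro w hw
    simp only [Finset.mem_insert, Finset.mem_singleton] at hw
    rcases hw with rfl | rfl
    · exact (G.mem_neighborFinset _ _).mpr e1.symm
    · exact (G.mem_neighborFinset _ _).mpr e2
  have hcard : ({p ⟨a - 1, by omega⟩, p ⟨a + 1, by omega⟩} : Finset V).card = 2 :=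
    Finset.card_pair hne
  have hdcard : (G.neighborFinset (p ⟨a, by omega⟩)).card = 2 := hdeg
  exact (Finset.eq_of_subset_of_card_le hsub (by rw [hcard, hdcard])).symm

lemma nbr_range {v : V} {ℓ : ℕ} {p : Fin (ℓ + 1) → V} (h : IsLeafPath G v ℓ p)
    {a : ℕ} (ha : a < ℓ + 1) (ha0 : a ≠ 0) {w : V} (hw : G.Adj (p ⟨a, ha⟩) w) :
    w ∈ Set.range p := by
  have hLP := h
  obtain ⟨hinj, h0, hdeg3, hadj, hleaf, hdeg2⟩ := h
  have hl1 : 1 ≤ ℓ := lp_pos hLP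
  by_cases hal : a = ℓ
  · have hEq : (⟨a, ha⟩ : Fin (ℓ + 1)) = Fin.last ℓ := by
      simp only [Fin.last, Fin.mk.injEq]; omega
    rw [hEq] at hw
    have e1 : G.Adj (p ⟨ℓ - 1, by omega⟩) (p (Fin.last ℓ)) := by
      have h' := adj_step hadj (show ℓ - 1 < ℓ by omega)
      have hEq2 : (⟨ℓ - 1 + 1, by omega⟩ : Fin (ℓ + 1)) = Fin.last ℓ := by
        simp only [Fin.last, Fin.mk.injEq]; omega
      rwa [hEq2] at h'
    have hmem1 : p ⟨ℓ - 1, by omega⟩ ∈ G.neighborFinset (p (Fin.last ℓ)) :=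
      (G.mem_neighborFinset _ _).mpr e1.symm
    have hmemw : w ∈ G.neighborFinset (p (Fin.last ℓ)) :=
      (G.mem_neighborFinset _ _).mpr hw
    have hc1 : (G.neighborFinset (p (Fin.last ℓ))).card ≤ 1 := le_of_eq hleaf
    have := Finset.card_le_one.mp hc1 w hmemw _ hmem1
    exact ⟨_, this.symm⟩
  · have haℓ : a < ℓ := by omega
    have hmemw : w ∈ G.neighborFinset (p ⟨a, by omega⟩) :=
      (G.mem_neighborFinset _ _).mpr hw
    rw [internal_nbrs hLP (by omega) haℓ] at hmemw
    simp only [Finset.mem_insert, Finset.mem_singleton] at hmemw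
    rcases hmemw with rfl | rfl
    · exact ⟨_, rfl⟩
    · exact ⟨_, rfl⟩

lemma walk_in {v : V} {ℓ : ℕ} {p : Fin (ℓ + 1) → V} (h : IsLeafPath G v ℓ p)
    {a b : V} (w : G.Walk a b) (hb : b ∈ Set.range p) (hbv : b ≠ v)
    (hv : v ∉ w.support) : a ∈ Set.range p ∧ a ≠ v := by
  revert hb hbv hv
  induction w with
  | nil => intro hb hbv _; exact ⟨hb, hbv⟩
  | @cons u c d hac w ih =>
    intro hb hbv hv
    simp only [Walk.support_cons, List.mem_cons] at hv
    push_neg at hv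
    obtain ⟨hc, hcv⟩ := ih hb hbv hv.2
    obtain ⟨i, rfl⟩ := hc
    have hi0 : (i : ℕ) ≠ 0 := by
      intro hcon
      apply hcv
      rw [← h.2.1]
      congr 1
      exact Fin.ext hcon
    refine ⟨?_, fun hcon => hv.1 hcon.symm⟩
    have hpe : p ⟨(i : ℕ), i.isLt⟩ = p i := by congr 1
    exact nbr_range h i.isLt hi0 (by rw [hpe]; exact hac.symm)

lemma dist_step {v : V} {ℓ : ℕ} {p : Fin (ℓ + 1) → V} (hT : G.IsTree)
    (h : IsLeafPath G v ℓ p) {s : V} (hs : s ∉ Set.range p) :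
    G.dist s (p ⟨1, by have := lp_pos h; omega⟩) = G.dist s v + 1 := by
  have hl1 : 1 ≤ ℓ := lp_pos h
  set x := p ⟨1, by omega⟩ with hx
  have hadjvx : G.Adj v x := by
    have h' := adj_step h.2.2.2.1 (show 0 < ℓ by omega)
    have h0 : p ⟨0, by omega⟩ = v := h.2.1
    rwa [h0] at h'
  have hdvx : G.dist v x = 1 := SimpleGraph.dist_eq_one_iff_adj.mpr hadjvx
  have hconn := hT.isConnected
  have hup : G.dist s x ≤ G.dist s v + 1 := by
    calc G.dist s x ≤ G.dist s v + G.dist v x := hconn.dist_triangle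
    _ = G.dist s v + 1 := by rw [hdvx]
  have hlow : G.dist s v + 1 ≤ G.dist s x := by
    obtain ⟨w, hw⟩ := hconn.exists_walk_length_eq_dist s x
    have hvmem : v ∈ w.support := by
      by_contra hcon
      have hxr : x ∈ Set.range p := ⟨_, rfl⟩
      have hxv : x ≠ v := by
        intro hcon'
        have h0 : p ⟨0, by omega⟩ = v := h.2.1
        have := h.1 (hcon'.trans h0.symm)
        simp only [Fin.mk.injEq] at this
        omega
      exact hs (walk_in h w hxr hxv hcon).1
    have hsplit := w.take_spec hvmem
    have hlen : (w.takeUntil v hvmem).length + (w.dropUntil v hvmem).length = w.length := by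
      rw [← SimpleGraph.Walk.length_append, hsplit]
    have h1 : G.dist s v ≤ (w.takeUntil v hvmem).length := SimpleGraph.dist_le _
    have h2 : G.dist v x ≤ (w.dropUntil v hvmem).length := SimpleGraph.dist_le _
    omega
  omega

lemma ranges_eq {v : V} {ℓ ℓ' : ℕ} {p : Fin (ℓ + 1) → V} {p' : Fin (ℓ' + 1) → V}
    (h : IsLeafPath G v ℓ p) (h' : IsLeafPath G v ℓ' p') (hll : ℓ ≤ ℓ')
    (h1 : p ⟨1, by have := lp_pos h; omega⟩ = p' ⟨1, by have := lp_pos h'; omega⟩) :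
    Set.range p = Set.range p' := by
  have hl1 : 1 ≤ ℓ := lp_pos h
  have hl1' : 1 ≤ ℓ' := lp_pos h'
  -- agreement up to ℓ
  have hagree : ∀ i : ℕ, ∀ _hi : i ≤ ℓ, p ⟨i, by omega⟩ = p' ⟨i, by omega⟩ := by
    intro i
    induction i using Nat.strong_induction_on with
    | _ i ih =>
      intro hi
      match i, hi, ih with
      | 0, _, _ => rw [show p ⟨0, by omega⟩ = v from h.2.1, show p' ⟨0, by omega⟩ = v from h'.2.1]
      | 1, _, _ => exact h1
      | (a + 2), hi, ih =>
        have e1 : p ⟨a, by omega⟩ = p' ⟨a, by omega⟩ := ih a (by omega) (by omega)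
        have e2 : p ⟨a + 1, by omega⟩ = p' ⟨a + 1, by omega⟩ := ih (a + 1) (by omega) (by omega)
        -- p' (a+2) is a neighbor of p (a+1)
        have hadj' : G.Adj (p ⟨a + 1, by omega⟩) (p' ⟨a + 2, by omega⟩) := by
          rw [e2]
          exact adj_step h'.2.2.2.1 (show a + 1 < ℓ' by omega)
        have hmem : p' ⟨a + 2, by omega⟩ ∈ G.neighborFinset (p ⟨a + 1, by omega⟩) :=
          (G.mem_neighborFinset _ _).mpr hadj'
        rw [internal_nbrs h (by omega) (show a + 1 < ℓ by omega)] at hmem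
        simp only [Finset.mem_insert, Finset.mem_singleton] at hmem
        have hIdx : (⟨a + 1 - 1, by omega⟩ : Fin (ℓ + 1)) = ⟨a, by omega⟩ := by
          simp only [Fin.mk.injEq]; omega
        rw [hIdx, e1] at hmem
        rcases hmem with hmem | hmem
        · exfalso
          have := h'.1 hmem
          simp only [Fin.mk.injEq] at this
          omega
        · exact hmem.symm
  -- lengths equal
  have hll' : ℓ = ℓ' := by
    by_contra hcon
    have hlt : ℓ < ℓ' := by omega
    have heq : p ⟨ℓ, by omega⟩ = p' ⟨ℓ, by omega⟩ := hagree ℓ le_rfl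
    have hd1 : G.degree (p ⟨ℓ, by omega⟩) = 1 := by
      have : (⟨ℓ, by omega⟩ : Fin (ℓ + 1)) = Fin.last ℓ := by
        simp only [Fin.last, Fin.mk.injEq]
      rw [this]
      exact h.2.2.2.2.1
    have hd2 : G.degree (p' ⟨ℓ, by omega⟩) = 2 :=
      h'.2.2.2.2.2 ⟨ℓ, by omega⟩ (show ℓ ≠ 0 by omega) (show ℓ ≠ ℓ' by omega)
    rw [heq, hd2] at hd1
    omega
  subst hll'
  ext x
  constructor
  · rintro ⟨i, rfl⟩
    refine ⟨i, ?_⟩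
    have := hagree i (by omega)
    have hi : (⟨(i : ℕ), by omega⟩ : Fin (ℓ + 1)) = i := Fin.ext rfl
    rw [hi] at this
    exact this.symm
  · rintro ⟨i, rfl⟩
    refine ⟨i, ?_⟩
    have := hagree i (by omega)
    have hi : (⟨(i : ℕ), by omega⟩ : Fin (ℓ + 1)) = i := Fin.ext rfl
    rw [hi] at this
    exact this

end Aux

/-- among `L ≥ 2` short leaf-paths from `v` (lengths ≤ k), at least
`L − 1` of them contain a sensor off `v`. -/
theorem stmt9 (G : SimpleGraph V) [Fintype V] [DecidableEq V] [DecidableRel G.Adj]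
    (hT : G.IsTree) (k : ℕ) (hk : 1 ≤ k) (S : Set V) (hS : ThresholdResolving G k S)
    (v : V) (L : ℕ) (hL : 2 ≤ L) (l : Fin L → ℕ)
    (p : (j : Fin L) → Fin (l j + 1) → V)
    (hp : ∀ j, IsLeafPath G v (l j) (p j))
    (hdist : ∀ j j', j ≠ j' → Set.range (p j) ≠ Set.range (p j'))
    (hshort : ∀ j, l j ≤ k) :
    L - 1 ≤ {j : Fin L | ∃ x ∈ S, x ∈ Set.range (p j) ∧ x ≠ v}.ncard := by
  classical
  set P : Set (Fin L) := {j : Fin L | ∃ x ∈ S, x ∈ Set.range (p j) ∧ x ≠ v} with hP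
  -- the complement is a subsingleton
  have hsub : ∀ j ∈ Pᶜ, ∀ j' ∈ Pᶜ, j = j' := by
    intro j hj j' hj'
    by_contra hne
    simp only [Set.mem_compl_iff, hP, Set.mem_setOf_eq] at hj hj'
    push_neg at hj hj'
    have hlj : 1 ≤ l j := lp_pos (hp j)
    have hlj' : 1 ≤ l j' := lp_pos (hp j')
    set x : V := p j ⟨1, by omega⟩ with hxdef
    set y : V := p j' ⟨1, by omega⟩ with hydef
    have hxv : x ≠ v := by
      intro hcon
      have h0 : p j ⟨0, by omega⟩ = v := (hp j).2.1
      have := (hp j).1 (hcon.trans h0.symm)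
      simp only [Fin.mk.injEq] at this
      omega
    have hyv : y ≠ v := by
      intro hcon
      have h0 : p j' ⟨0, by omega⟩ = v := (hp j').2.1
      have := (hp j').1 (hcon.trans h0.symm)
      simp only [Fin.mk.injEq] at this
      omega
    have hxy : x ≠ y := by
      intro hcon
      rcases le_total (l j) (l j') with hle | hle
      · exact hdist j j' hne (ranges_eq (hp j) (hp j') hle hcon)
      · exact hdist j' j (Ne.symm hne) (ranges_eq (hp j') (hp j) hle hcon.symm)
    obtain ⟨s, hsS, hsd⟩ := hS.1 x y hxy
    apply hsd
    by_cases hsv : s = v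
    · have hadjx : G.Adj v x := by
        have h' := adj_step (hp j).2.2.2.1 (show 0 < l j by omega)
        have h0 : p j ⟨0, by omega⟩ = v := (hp j).2.1
        rwa [h0] at h'
      have hadjy : G.Adj v y := by
        have h' := adj_step (hp j').2.2.2.1 (show 0 < l j' by omega)
        have h0 : p j' ⟨0, by omega⟩ = v := (hp j').2.1
        rwa [h0] at h'
      unfold dk
      rw [hsv, SimpleGraph.dist_eq_one_iff_adj.mpr hadjx, SimpleGraph.dist_eq_one_iff_adj.mpr hadjy]
    · have hsr : s ∉ Set.range (p j) := fun hmem => hsv (hj s hsS hmem)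
      have hsr' : s ∉ Set.range (p j') := fun hmem => hsv (hj' s hsS hmem)
      unfold dk
      rw [dist_step hT (hp j) hsr, dist_step hT (hp j') hsr']
  have hcompl : Pᶜ.ncard ≤ 1 := (Set.ncard_le_one (Set.toFinite _)).mpr hsub
  have hsum : P.ncard + Pᶜ.ncard = Nat.card (Fin L) :=
    Set.ncard_add_ncard_compl P (Set.toFinite _) (Set.toFinite _)
  rw [Nat.card_eq_fintype_card, Fintype.card_fin] at hsum
  omega
end

section
/- Let T be a tree with threshold-k resolving set S and let v be a vertex with at least two leaf-paths. Then all but at most one leaf-path P_j from v satisfies |S ∩ (V(P_j) \ {v})| ≥ c̄(ℓ(P_j)), and the remaining leaf-path P* satisfies |S ∩ (V(P*) \ {v})| ≥ c̲(ℓ(P*)), where for ℓ = q(3k+2) + r, 0 ≤ r ≤ 3k+1, the upper complexity is c̄(ℓ) = 2q + [r ≥ 1] + [r ≥ 2k+2] and the lower complexity is c̲(ℓ) = 2q + [r ≥ k+1] + [r ≥ 2k+2]. -/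
open SimpleGraph Finset

variable {V : Type*}

/-!
Index a leaf-path from `v` as `v = P 0, …, P ℓ` and let `1 ≤ m₁ < ⋯ < m_t ≤ ℓ` be the positions
of its sensors. Since the path hangs off `v`, a sensor `s` off the path is at distance
`d(s, v) + i` from `P i`. Covering makes every gap `m_{j+1} - m_j` (and `m₁ - 0`) at most `2k + 1`
and puts `ℓ` within `k` of `m_t`. The neighbours `P (m - 1)`, `P (m + 1)` of a sensor at position
`m ≥ k + 2` are resolved only by another sensor within `k + 1` of `m`, so no two consecutive gaps
exceed `k + 1`. Hence `ℓ ≤ t (k + 1) + k Y` with `2 Y ≤ t + 2`, which is `c̲(ℓ) ≤ t`, and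
`2 Y ≤ t + 1`, i.e. `c̄(ℓ) ≤ t`, once some sensor sits within `k + 1` of `v`. The first vertices of
two leaf-paths are resolved only by such a near sensor on one of them, so at most one leaf-path
lacks one.
-/

theorem Nat.div_lt_or_div_eq_and_mod_le {d s e ℓ : ℕ} (he : e < d) (h : ℓ ≤ s * d + e) :
    ℓ / d < s ∨ (ℓ / d = s ∧ ℓ % d ≤ e) := by
  have hdm := Nat.div_add_mod ℓ d
  generalize ℓ / d = q at *
  generalize ℓ % d = r at *
  rcases lt_trichotomy q s with hlt | rfl | hgt
  · exact Or.inl hlt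
  · exact Or.inr ⟨rfl, by nlinarith⟩
  · have : d * (s + 1) ≤ d * q := Nat.mul_le_mul_left d hgt
    nlinarith

theorem Fin.clamp_of_le {i ℓ : ℕ} (h : i ≤ ℓ) : Fin.clamp i ℓ = ⟨i, Nat.lt_succ_of_le h⟩ :=
  Fin.ext (by simp [Fin.coe_clamp, h])

theorem Fin.range_eq_image_clamp {α : Type*} {ℓ : ℕ} (p : Fin (ℓ + 1) → α) :
    Set.range p = (fun i => p (Fin.clamp i ℓ)) '' Set.Iic ℓ := by
  ext x
  constructor
  · rintro ⟨i, rfl⟩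
    exact ⟨i, Nat.lt_succ_iff.1 i.2, by simp only [Fin.clamp_of_le (Nat.lt_succ_iff.1 i.2)]⟩
  · rintro ⟨i, -, rfl⟩
    exact ⟨_, rfl⟩

theorem Fin.range_eq_of_eqOn_clamp {α : Type*} {ℓ ℓ' : ℕ} {p : Fin (ℓ + 1) → α}
    {p' : Fin (ℓ' + 1) → α} (hℓ : ℓ = ℓ')
    (h : Set.EqOn (fun i => p (Fin.clamp i ℓ)) (fun i => p' (Fin.clamp i ℓ')) (Set.Iic ℓ)) :
    Set.range p = Set.range p' := by
  subst hℓ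
  rw [Fin.range_eq_image_clamp, Fin.range_eq_image_clamp, Set.image_congr h]

theorem exists_forall_ne_of_pairwise_or {ι : Type*} [Nonempty ι] {Q : ι → Prop}
    (h : ∀ i j, i ≠ j → Q i ∨ Q j) : ∃ i₀, ∀ i, i ≠ i₀ → Q i := by
  by_cases h0 : ∃ i₀, ¬Q i₀
  · obtain ⟨i₀, hi₀⟩ := h0
    exact ⟨i₀, fun i hi => (h i i₀ hi).resolve_right hi₀⟩
  · push Not at h0
    exact ⟨Classical.arbitrary ι, fun i _ => h0 i⟩

namespace SimpleGraph

variable {G : SimpleGraph V}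

theorem Connected.exists_adj_dist_eq_add_one (hG : G.Connected) {x u : V} (h : x ≠ u) :
    ∃ w, G.Adj w u ∧ G.dist x u = G.dist x w + 1 := by
  obtain ⟨q, hq⟩ := (hG.preconnected u x).exists_walk_length_eq_dist
  cases q with
  | nil => exact absurd rfl h
  | @cons _ w _ hadj q =>
    refine ⟨w, hadj.symm, ?_⟩
    have hle := dist_le q
    have htri := hG.dist_triangle (u := u) (v := w) (w := x)
    rw [dist_eq_one_iff_adj.mpr hadj] at htri
    rw [Walk.length_cons] at hq
    rw [dist_comm, dist_comm (u := x)]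
    omega

theorem mem_of_adj_of_degree_le [Fintype V] [DecidableRel G.Adj] {u w : V} {s : Finset V}
    (hs : ∀ a ∈ s, G.Adj u a) (hdeg : G.degree u ≤ #s) (hw : G.Adj u w) : w ∈ s := by
  have hsub : s ⊆ G.neighborFinset u := fun a ha => (mem_neighborFinset G u a).2 (hs a ha)
  rw [eq_of_subset_of_card_le hsub (by rwa [card_neighborFinset_eq_degree])]
  exact (mem_neighborFinset G u w).2 hw

end SimpleGraph

namespace LeafPath

theorem cbar_le_of_le {k t Y ℓ : ℕ} (h : ℓ ≤ t * (k + 1) + k * Y) (hY : 2 * Y ≤ t + 1) :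
    cbar k ℓ ≤ t := by
  obtain ⟨s, rfl | rfl⟩ := Nat.even_or_odd' t
  · have hY : Y ≤ s := by omega
    have : ℓ ≤ s * (3 * k + 2) + 0 := by nlinarith
    rcases Nat.div_lt_or_div_eq_and_mod_le (by omega) this with hq | ⟨hq, hr⟩ <;>
      unfold cbar <;> split_ifs <;> omega
  · have hY : Y ≤ s + 1 := by omega
    have : ℓ ≤ s * (3 * k + 2) + (2 * k + 1) := by nlinarith
    rcases Nat.div_lt_or_div_eq_and_mod_le (by omega) this with hq | ⟨hq, hr⟩ <;>
      unfold cbar <;> split_ifs <;> omega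

theorem clow_le_of_le {k t Y ℓ : ℕ} (h : ℓ ≤ t * (k + 1) + k * Y) (hY : 2 * Y ≤ t + 2) :
    clow k ℓ ≤ t := by
  obtain ⟨s, rfl | rfl⟩ := Nat.even_or_odd' t
  · have hY : Y ≤ s + 1 := by omega
    have : ℓ ≤ s * (3 * k + 2) + k := by nlinarith
    rcases Nat.div_lt_or_div_eq_and_mod_le (by omega) this with hq | ⟨hq, hr⟩ <;>
      unfold clow <;> split_ifs <;> omega
  · have hY : Y ≤ s + 1 := by omega
    have : ℓ ≤ s * (3 * k + 2) + (2 * k + 1) := by nlinarith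
    rcases Nat.div_lt_or_div_eq_and_mod_le (by omega) this with hq | ⟨hq, hr⟩ <;>
      unfold clow <;> split_ifs <;> omega

section Counting

variable (k : ℕ)

def Covers (ℓ : ℕ) (I : Finset ℕ) : Prop :=
  ∀ i, k + 1 ≤ i → i ≤ ℓ → ∃ m ∈ I, i ≤ m + k ∧ m ≤ i + k

def Paired (ℓ : ℕ) (I : Finset ℕ) : Prop :=
  ∀ m ∈ I, k + 2 ≤ m → m < ℓ → ∃ b ∈ I, b ≠ m ∧ m ≤ b + (k + 1) ∧ b ≤ m + (k + 1)

def Near (I : Finset ℕ) : Prop := ∃ m ∈ I, m ≤ k + 1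

def CloseBelow (I : Finset ℕ) (M : ℕ) : Prop := M ≤ k + 1 ∨ ∃ b ∈ I, b < M ∧ M ≤ b + (k + 1)

variable {k} {ℓ M a : ℕ} {I s : Finset ℕ}

theorem Covers.mono {ℓ' : ℕ} (h : Covers k ℓ I) (hle : ℓ' ≤ ℓ) : Covers k ℓ' I :=
  fun i hi hiℓ => h i hi (hiℓ.trans hle)

theorem Paired.mono {ℓ' : ℕ} (h : Paired k ℓ I) (hle : ℓ' ≤ ℓ) : Paired k ℓ' I :=
  fun m hm hkm hmℓ => h m hm hkm (hmℓ.trans_le hle)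

theorem Covers.of_insert (hs : ∀ x ∈ s, x < a) (hM : M ∈ s) (h : Covers k a (insert a s)) :
    Covers k M s := by
  intro i hi hiM
  have hMa := hs M hM
  obtain ⟨m, hm, h1, h2⟩ := h i hi (by omega)
  rcases mem_insert.1 hm with rfl | hm
  · exact ⟨M, hM, by omega, by omega⟩
  · exact ⟨m, hm, h1, h2⟩

theorem Paired.of_insert (hs : ∀ x ∈ s, x < a) (hM : M ∈ s) (h : Paired k a (insert a s)) :
    Paired k M s := by
  intro m hm hkm hmM
  have hMa := hs M hM
  obtain ⟨b, hb, hbm, h1, h2⟩ := h m (mem_insert_of_mem hm) hkm (by omega)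
  rcases mem_insert.1 hb with rfl | hb
  · exact ⟨M, hM, hmM.ne', by omega, by omega⟩
  · exact ⟨b, hb, hbm, h1, h2⟩

theorem le_add_of_covers_insert (hmax : ∀ x ∈ s, x ≤ M) (h : Covers k a (insert a s)) :
    a ≤ M + (2 * k + 1) := by
  by_contra hlt
  obtain ⟨m, hm, h1, h2⟩ := h (M + k + 1) (by omega) (by omega)
  rcases mem_insert.1 hm with rfl | hm
  · omega
  · have := hmax m hm
    omega

theorem le_add_of_closeBelow_insert (hmax : ∀ x ∈ s, x ≤ M)
    (h : CloseBelow k (insert a s) a) : a ≤ M + (k + 1) := by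
  rcases h with h | ⟨b, hb, hba, h⟩
  · omega
  · rcases mem_insert.1 hb with rfl | hb
    · omega
    · have := hmax b hb
      omega

theorem closeBelow_of_not_closeBelow_insert (hs : ∀ x ∈ s, x < a) (hM : M ∈ s)
    (hmax : ∀ x ∈ s, x ≤ M) (hpair : Paired k a (insert a s))
    (h : ¬CloseBelow k (insert a s) a) : CloseBelow k s M := by
  rcases le_or_gt M (k + 1) with hMk | hMk
  · exact Or.inl hMk
  obtain ⟨b, hb, hbM, h1, h2⟩ := hpair M (mem_insert_of_mem hM) (by omega) (hs M hM)
  rcases mem_insert.1 hb with rfl | hb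
  · exact absurd (Or.inr ⟨M, mem_insert_of_mem hM, hs M hM, h2⟩) h
  · exact Or.inr ⟨b, hb, lt_of_le_of_ne (hmax b hb) hbM, h1⟩

theorem near_insert_iff (hs : ∀ x ∈ s, x < a) (hne : s.Nonempty) :
    Near k (insert a s) ↔ Near k s := by
  constructor
  · rintro ⟨m, hm, hmk⟩
    rcases mem_insert.1 hm with rfl | hm
    · obtain ⟨x, hx⟩ := hne
      exact ⟨x, hx, (hs x hx).le.trans hmk⟩
    · exact ⟨m, hm, hmk⟩
  · rintro ⟨m, hm, hmk⟩
    exact ⟨m, mem_insert_of_mem hm, hmk⟩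

open Classical in
/-- `X` counts the long gaps between consecutive positions, those ending at a position that is not
`CloseBelow`: every gap is at most `2k + 1`, a short one at most `k + 1`, and `Paired` forbids two
long gaps in a row. -/
theorem exists_bound_of_isMax (I : Finset ℕ) :
    ∀ M ∈ I, (∀ m ∈ I, m ≤ M) → Covers k M I → Paired k M I →
      ∃ X, M ≤ #I * (k + 1) + k * X ∧
        2 * X + (if CloseBelow k I M then 1 else 0) ≤ #I + (if Near k I then 0 else 1) := by
  induction I using Finset.induction_on_max with
  | empty => simp
  | insert a s hs ih =>
    intro M hM hmax hcov hpair
    obtain rfl : M = a := by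
      rcases mem_insert.1 hM with h | h
      · exact h
      · exact absurd (hmax a (mem_insert_self a s)) (not_le.2 (hs M h))
    rw [card_insert_of_notMem fun h => lt_irrefl M (hs M h)]
    rcases s.eq_empty_or_nonempty with rfl | hne
    · have h2k := le_add_of_covers_insert (M := 0) (by simp) hcov
      have hcb : CloseBelow k {M} M ↔ M ≤ k + 1 := by simp [CloseBelow]
      have hnear : Near k {M} ↔ M ≤ k + 1 := by simp [Near]
      rw [insert_empty, card_empty, zero_add]
      by_cases hM : M ≤ k + 1
      · exact ⟨0, by omega, by rw [if_pos (hcb.2 hM), if_pos (hnear.2 hM)]⟩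
      · exact ⟨1, by omega, by rw [if_neg (mt hcb.1 hM), if_neg (mt hnear.1 hM)]⟩
    · have hM's := s.max'_mem hne
      have hmax' : ∀ x ∈ s, x ≤ s.max' hne := fun x hx => s.le_max' x hx
      obtain ⟨X, hX, hX2⟩ := ih _ hM's hmax' (hcov.of_insert hs hM's) (hpair.of_insert hs hM's)
      rw [near_insert_iff hs hne]
      by_cases hc : CloseBelow k (insert M s) M
      · have := le_add_of_closeBelow_insert hmax' hc
        refine ⟨X, by linarith, ?_⟩
        rw [if_pos hc]
        split_ifs at hX2 ⊢ <;> omega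
      · have := le_add_of_covers_insert hmax' hcov
        have hcb := closeBelow_of_not_closeBelow_insert hs hM's hmax' hpair hc
        refine ⟨X + 1, by linarith, ?_⟩
        rw [if_neg hc]
        rw [if_pos hcb] at hX2
        split_ifs at hX2 ⊢ <;> omega

theorem exists_length_bound (hI : ∀ m ∈ I, m ≤ ℓ) (hcov : Covers k ℓ I) (hpair : Paired k ℓ I) :
    ∃ Y, ℓ ≤ #I * (k + 1) + k * Y ∧ 2 * Y ≤ #I + 2 ∧ (Near k I → 2 * Y ≤ #I + 1) := by
  rcases I.eq_empty_or_nonempty with rfl | hne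
  · refine ⟨1, ?_, by simp, fun ⟨m, hm, _⟩ => absurd hm (notMem_empty m)⟩
    by_contra h
    obtain ⟨m, hm, -⟩ := hcov ℓ (by simp at h; omega) le_rfl
    exact notMem_empty m hm
  have hMI := I.max'_mem hne
  have hmax : ∀ x ∈ I, x ≤ I.max' hne := fun x hx => I.le_max' x hx
  have hMℓ := hI _ hMI
  obtain ⟨X, hX, hX2⟩ := exists_bound_of_isMax I _ hMI hmax (hcov.mono hMℓ) (hpair.mono hMℓ)
  rcases hMℓ.eq_or_lt with hMℓ | hMℓ
  · refine ⟨X, hMℓ ▸ hX, by split_ifs at hX2 <;> omega, fun hn => ?_⟩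
    rw [if_pos hn] at hX2
    omega
  · have hℓ : ℓ ≤ I.max' hne + k := by
      by_contra h
      obtain ⟨m, hm, h1, -⟩ := hcov ℓ (by omega) le_rfl
      have := hmax m hm
      omega
    have hcb : CloseBelow k I (I.max' hne) := by
      rcases le_or_gt (I.max' hne) (k + 1) with h | h
      · exact Or.inl h
      obtain ⟨b, hb, hbM, h1, -⟩ := hpair _ hMI (by omega) hMℓ
      exact Or.inr ⟨b, hb, lt_of_le_of_ne (hmax b hb) hbM, h1⟩
    rw [if_pos hcb] at hX2
    refine ⟨X + 1, by linarith, by split_ifs at hX2 <;> omega, fun hn => ?_⟩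
    rw [if_pos hn] at hX2
    omega

theorem clow_le_card (hI : ∀ m ∈ I, m ≤ ℓ) (hcov : Covers k ℓ I) (hpair : Paired k ℓ I) :
    clow k ℓ ≤ #I := by
  obtain ⟨Y, h, hY, -⟩ := exists_length_bound hI hcov hpair
  exact clow_le_of_le h hY

theorem cbar_le_card (hI : ∀ m ∈ I, m ≤ ℓ) (hcov : Covers k ℓ I) (hpair : Paired k ℓ I)
    (hnear : Near k I) : cbar k ℓ ≤ #I := by
  obtain ⟨Y, h, -, hY⟩ := exists_length_bound hI hcov hpair
  exact cbar_le_of_le h (hY hnear)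

end Counting

variable {G : SimpleGraph V} {k : ℕ} {S : Set V} {v : V} {ℓ ℓ' m : ℕ} {P P' : ℕ → V}

/-- Positions are natural numbers, only `P 0, …, P ℓ` being relevant, so that arithmetic on them
stays in `ℕ`. -/
structure IsPendantPath (G : SimpleGraph V) (v : V) (ℓ : ℕ) (P : ℕ → V) : Prop where
  one_le : 1 ≤ ℓ
  apply_zero : P 0 = v
  injOn : Set.InjOn P (Set.Iic ℓ)
  adj : ∀ i < ℓ, G.Adj (P i) (P (i + 1))
  eq_of_adj : ∀ i, 1 ≤ i → i ≤ ℓ → ∀ w, G.Adj (P i) w → w = P (i - 1) ∨ i < ℓ ∧ w = P (i + 1)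

theorem _root_.IsLeafPath.isPendantPath [Fintype V] [DecidableRel G.Adj] {p : Fin (ℓ + 1) → V}
    (hp : IsLeafPath G v ℓ p) :
    IsPendantPath G v ℓ (fun i => p (Fin.clamp i ℓ)) := by
  classical
  obtain ⟨hinj, h0, hv, hadj, hleaf, hdeg⟩ := hp
  set P := fun i => p (Fin.clamp i ℓ)
  have hP : ∀ i (h : i ≤ ℓ), P i = p ⟨i, Nat.lt_succ_of_le h⟩ := fun i h => by
    simp only [P, Fin.clamp_of_le h]
  have one_le : 1 ≤ ℓ := by
    by_contra h
    obtain rfl : ℓ = 0 := by omega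
    rw [show Fin.last 0 = 0 from rfl, h0] at hleaf
    omega
  have injOn : Set.InjOn P (Set.Iic ℓ) := fun i hi j hj hij => by
    rw [hP i hi, hP j hj] at hij
    exact congrArg Fin.val (hinj hij)
  have adj : ∀ i < ℓ, G.Adj (P i) (P (i + 1)) := fun i hi => by
    rw [hP i hi.le, hP (i + 1) hi]
    exact hadj ⟨i, hi⟩
  refine ⟨one_le, by rw [hP 0 (Nat.zero_le _)]; exact h0, injOn, adj, ?_⟩
  intro i hi1 hiℓ w hw
  have hprev : G.Adj (P i) (P (i - 1)) := by
    simpa [Nat.sub_add_cancel hi1] using (adj (i - 1) (by omega)).symm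
  rcases hiℓ.lt_or_eq with hlt | rfl
  · have hne : P (i - 1) ≠ P (i + 1) := fun h => by
      have := injOn (Set.mem_Iic.2 (by omega)) (Set.mem_Iic.2 hlt) h
      omega
    have hdeg2 : G.degree (P i) = 2 := by
      rw [hP i hiℓ]
      exact hdeg ⟨i, by omega⟩ (by simp; omega) (by simp; omega)
    have := mem_of_adj_of_degree_le (s := {P (i - 1), P (i + 1)})
      (by simpa using ⟨hprev, adj i hlt⟩) (by rw [card_pair hne, hdeg2]) hw
    simp only [mem_insert, mem_singleton] at this
    exact this.imp id fun h => ⟨hlt, h⟩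
  · have hdeg1 : G.degree (P i) = 1 := by
      rw [hP i le_rfl]
      exact hleaf
    exact Or.inl (mem_singleton.1 (mem_of_adj_of_degree_le (s := {P (i - 1)})
      (by simpa using hprev) (by rw [card_singleton, hdeg1]) hw))

namespace IsPendantPath

/-- A shortest path from `x` to `P (i + 1)` arrives through `P i`: through `P (i + 2)` it would
have to come back from the leaf end. -/
theorem dist_succ (hG : G.Connected) (hP : IsPendantPath G v ℓ P) {x : V} {i : ℕ} (hi : i < ℓ)
    (hx : ∀ j, i < j → j ≤ ℓ → x ≠ P j) : G.dist x (P (i + 1)) = G.dist x (P i) + 1 := by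
  induction hn : ℓ - i using Nat.strong_induction_on generalizing i with
  | _ n ih =>
    obtain ⟨w, hw, hdist⟩ := hG.exists_adj_dist_eq_add_one (hx (i + 1) (by omega) hi)
    rcases hP.eq_of_adj (i + 1) (by omega) hi w hw.symm with rfl | ⟨hlt, rfl⟩
    · simpa using hdist
    · have := ih (ℓ - (i + 1)) (by omega) hlt (fun j hj hjℓ => hx j (by omega) hjℓ) rfl
      omega

theorem dist_add (hG : G.Connected) (hP : IsPendantPath G v ℓ P) {x : V} {a d : ℕ}
    (h : a + d ≤ ℓ) (hx : ∀ j, a < j → j ≤ ℓ → x ≠ P j) :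
    G.dist x (P (a + d)) = G.dist x (P a) + d := by
  induction d with
  | zero => rfl
  | succ d ih =>
    rw [← add_assoc, hP.dist_succ hG (by omega) fun j hj hjℓ => hx j (by omega) hjℓ,
      ih (by omega)]
    rfl

theorem dist_eq (hG : G.Connected) (hP : IsPendantPath G v ℓ P) {a b : ℕ} (ha : a ≤ ℓ)
    (hb : b ≤ ℓ) : G.dist (P a) (P b) = a - b + (b - a) := by
  wlog hab : a ≤ b generalizing a b
  · rw [dist_comm, this hb ha (by omega)]
    omega
  have hx : ∀ j, a < j → j ≤ ℓ → P a ≠ P j := fun j hj hjℓ h => by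
    have := hP.injOn (Set.mem_Iic.2 ha) (Set.mem_Iic.2 hjℓ) h
    omega
  have := hP.dist_add hG (d := b - a) (by omega) hx
  rw [Nat.add_sub_cancel' hab, dist_self] at this
  omega

theorem dist_apply_zero (hG : G.Connected) (hP : IsPendantPath G v ℓ P) {i : ℕ} (hi : i ≤ ℓ) :
    G.dist v (P i) = i := by
  simpa [hP.apply_zero] using hP.dist_eq hG (Nat.zero_le ℓ) hi

theorem mem_or_dist_eq (hG : G.Connected) (hP : IsPendantPath G v ℓ P) (x : V) :
    (∃ m, 1 ≤ m ∧ m ≤ ℓ ∧ P m = x) ∨ ∀ i ≤ ℓ, G.dist x (P i) = G.dist x v + i := by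
  by_cases h : ∃ m, 1 ≤ m ∧ m ≤ ℓ ∧ P m = x
  · exact Or.inl h
  push Not at h
  refine Or.inr fun i hi => ?_
  simpa [hP.apply_zero] using hP.dist_add hG (a := 0) (d := i) (by omega)
    fun j hj hjℓ => (h j hj hjℓ).symm

theorem apply_eq_of_apply_one_eq (hG : G.Connected) (hP : IsPendantPath G v ℓ P)
    (hP' : IsPendantPath G v ℓ' P') (h1 : P 1 = P' 1) : ∀ t ≤ ℓ', t ≤ ℓ ∧ P' t = P t := by
  intro t
  induction t with
  | zero => exact fun _ => ⟨Nat.zero_le ℓ, by rw [hP.apply_zero, hP'.apply_zero]⟩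
  | succ t ih =>
    intro ht
    rcases Nat.eq_zero_or_pos t with rfl | htpos
    · exact ⟨hP.one_le, h1.symm⟩
    obtain ⟨htℓ, heq⟩ := ih (by omega)
    have hadj : G.Adj (P t) (P' (t + 1)) := heq ▸ hP'.adj t (by omega)
    rcases hP.eq_of_adj t htpos htℓ _ hadj with h | h
    · have := hP'.dist_apply_zero hG ht
      rw [h, hP.dist_apply_zero hG (by omega)] at this
      omega
    · exact h

theorem apply_one_eq_of_apply_eq (hG : G.Connected) (hP : IsPendantPath G v ℓ P)
    (hP' : IsPendantPath G v ℓ' P') {i : ℕ} (hi1 : 1 ≤ i) (hi : i ≤ ℓ) (hi' : i ≤ ℓ')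
    (h : P i = P' i) : P 1 = P' 1 := by
  induction i with
  | zero => omega
  | succ i ih =>
    rcases Nat.eq_zero_or_pos i with rfl | hipos
    · exact h
    refine ih hipos (by omega) (by omega) ?_
    have hadj : G.Adj (P (i + 1)) (P' i) := h ▸ (hP'.adj i (by omega)).symm
    rcases hP.eq_of_adj (i + 1) (by omega) hi _ hadj with h' | ⟨hlt, h'⟩
    · simpa using h'.symm
    · have := hP'.dist_apply_zero hG (i := i) (by omega)
      rw [h', hP.dist_apply_zero hG hlt] at this
      omega

theorem eq_of_apply_eq (hG : G.Connected) (hP : IsPendantPath G v ℓ P)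
    (hP' : IsPendantPath G v ℓ' P') {i m : ℕ} (hi1 : 1 ≤ i) (hi : i ≤ ℓ) (hm : m ≤ ℓ')
    (h : P i = P' m) : ℓ = ℓ' ∧ Set.EqOn P P' (Set.Iic ℓ) := by
  obtain rfl : i = m := by
    have := hP'.dist_apply_zero hG hm
    rwa [← h, hP.dist_apply_zero hG hi] at this
  have h1 := hP.apply_one_eq_of_apply_eq hG hP' hi1 hi hm h
  have hle' := hP.apply_eq_of_apply_one_eq hG hP' h1
  obtain rfl : ℓ = ℓ' :=
    le_antisymm (hP'.apply_eq_of_apply_one_eq hG hP h1.symm ℓ le_rfl).1 (hle' ℓ' le_rfl).1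
  exact ⟨rfl, fun t ht => (hle' t ht).2.symm⟩

end IsPendantPath

open Classical in
noncomputable def sensorPositions (S : Set V) (ℓ : ℕ) (P : ℕ → V) : Finset ℕ :=
  {m ∈ Icc 1 ℓ | P m ∈ S}

theorem mem_sensorPositions : m ∈ sensorPositions S ℓ P ↔ (1 ≤ m ∧ m ≤ ℓ) ∧ P m ∈ S := by
  simp [sensorPositions]

namespace IsPendantPath

theorem covers_sensorPositions (hG : G.Connected) (hP : IsPendantPath G v ℓ P)
    (hS : ThresholdResolving G k S) : Covers k ℓ (sensorPositions S ℓ P) := by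
  intro i hki hiℓ
  obtain ⟨s, hs, hsi⟩ := hS.2 (P i)
  rcases hP.mem_or_dist_eq hG s with ⟨m, hm1, hmℓ, rfl⟩ | hoff
  · rw [hP.dist_eq hG hmℓ hiℓ] at hsi
    exact ⟨m, mem_sensorPositions.2 ⟨⟨hm1, hmℓ⟩, hs⟩, by omega, by omega⟩
  · rw [hoff i hiℓ] at hsi
    omega

/-- A sensor far enough from `v` cannot tell its two neighbours apart, nor can any sensor off
the path; some other sensor on the path must be close. -/
theorem paired_sensorPositions (hG : G.Connected) (hP : IsPendantPath G v ℓ P)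
    (hS : ThresholdResolving G k S) : Paired k ℓ (sensorPositions S ℓ P) := by
  intro m hm hkm hmℓ
  have hne : P (m - 1) ≠ P (m + 1) := fun h => by
    have := hP.injOn (Set.mem_Iic.2 (by omega)) (Set.mem_Iic.2 hmℓ) h
    omega
  obtain ⟨s, hs, hdk⟩ := hS.1 _ _ hne
  unfold dk at hdk
  rcases hP.mem_or_dist_eq hG s with ⟨b, hb1, hbℓ, rfl⟩ | hoff
  · rw [hP.dist_eq hG hbℓ (by omega), hP.dist_eq hG hbℓ hmℓ] at hdk
    refine ⟨b, mem_sensorPositions.2 ⟨⟨hb1, hbℓ⟩, hs⟩, ?_, ?_, ?_⟩ <;> omega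
  · rw [hoff _ (by omega), hoff _ hmℓ] at hdk
    omega

theorem le_of_dk_ne (hG : G.Connected) (hP : IsPendantPath G v ℓ P)
    (hP' : IsPendantPath G v ℓ' P') {b : ℕ} (hb : b ≤ ℓ)
    (hoff : ∀ i ≤ ℓ', G.dist (P b) (P' i) = G.dist (P b) v + i)
    (h : dk G k (P b) (P 1) ≠ dk G k (P b) (P' 1)) : b ≤ k + 1 := by
  unfold dk at h
  rw [hP.dist_eq hG hb hP.one_le, hoff 1 hP'.one_le, dist_comm, hP.dist_apply_zero hG hb] at h
  omega

/-- Only a sensor within `k + 1` of `v` on one of the two paths tells their first vertices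
apart. -/
theorem near_or_near (hG : G.Connected) (hP : IsPendantPath G v ℓ P)
    (hP' : IsPendantPath G v ℓ' P') (hS : ThresholdResolving G k S)
    (hne : ¬(ℓ = ℓ' ∧ Set.EqOn P P' (Set.Iic ℓ))) :
    Near k (sensorPositions S ℓ P) ∨ Near k (sensorPositions S ℓ' P') := by
  have hdisj : ∀ i m, 1 ≤ i → i ≤ ℓ → m ≤ ℓ' → P i ≠ P' m :=
    fun i m hi1 hi hm h => hne (hP.eq_of_apply_eq hG hP' hi1 hi hm h)
  obtain ⟨s, hs, hdk⟩ := hS.1 (P 1) (P' 1) (hdisj 1 1 le_rfl hP.one_le hP'.one_le)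
  rcases hP.mem_or_dist_eq hG s with ⟨b, hb1, hbℓ, rfl⟩ | hoff
  · refine Or.inl ⟨b, mem_sensorPositions.2 ⟨⟨hb1, hbℓ⟩, hs⟩, ?_⟩
    rcases hP'.mem_or_dist_eq hG (P b) with ⟨m, -, hm, h⟩ | hoff'
    · exact absurd h.symm (hdisj b m hb1 hbℓ hm)
    · exact hP.le_of_dk_ne hG hP' hbℓ hoff' hdk
  rcases hP'.mem_or_dist_eq hG s with ⟨b, hb1, hbℓ, rfl⟩ | hoff'
  · exact Or.inr ⟨b, mem_sensorPositions.2 ⟨⟨hb1, hbℓ⟩, hs⟩,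
      hP'.le_of_dk_ne hG hP hbℓ hoff (Ne.symm hdk)⟩
  · unfold dk at hdk
    rw [hoff 1 hP.one_le, hoff' 1 hP'.one_le] at hdk
    exact absurd rfl hdk

theorem clow_le_card_sensorPositions (hG : G.Connected) (hP : IsPendantPath G v ℓ P)
    (hS : ThresholdResolving G k S) : clow k ℓ ≤ #(sensorPositions S ℓ P) :=
  clow_le_card (fun _ hm => (mem_sensorPositions.1 hm).1.2) (hP.covers_sensorPositions hG hS)
    (hP.paired_sensorPositions hG hS)

theorem cbar_le_card_sensorPositions (hG : G.Connected) (hP : IsPendantPath G v ℓ P)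
    (hS : ThresholdResolving G k S) (hnear : Near k (sensorPositions S ℓ P)) :
    cbar k ℓ ≤ #(sensorPositions S ℓ P) :=
  cbar_le_card (fun _ hm => (mem_sensorPositions.1 hm).1.2) (hP.covers_sensorPositions hG hS)
    (hP.paired_sensorPositions hG hS) hnear

theorem ncard_inter_image_diff (hP : IsPendantPath G v ℓ P) :
    (S ∩ (P '' Set.Iic ℓ \ {v})).ncard = #(sensorPositions S ℓ P) := by
  have himage : S ∩ (P '' Set.Iic ℓ \ {v}) = P '' ↑(sensorPositions S ℓ P) := by
    ext x
    simp only [Set.mem_inter_iff, Set.mem_sdiff, Set.mem_image, Set.mem_Iic, Set.mem_singleton_iff,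
      mem_coe, mem_sensorPositions]
    constructor
    · rintro ⟨hxS, ⟨i, hi, rfl⟩, hxv⟩
      have hi1 : i ≠ 0 := by
        rintro rfl
        exact hxv hP.apply_zero
      exact ⟨i, ⟨⟨by omega, hi⟩, hxS⟩, rfl⟩
    · rintro ⟨m, ⟨⟨hm1, hm⟩, hmS⟩, rfl⟩
      refine ⟨hmS, ⟨m, hm, rfl⟩, fun h => ?_⟩
      have := hP.injOn (Set.mem_Iic.2 hm) (Set.mem_Iic.2 (Nat.zero_le ℓ))
        (h.trans hP.apply_zero.symm)
      omega
  rw [himage, Set.InjOn.ncard_image, Set.ncard_coe_finset]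
  exact hP.injOn.mono fun m hm => Set.mem_Iic.2 (mem_sensorPositions.1 hm).1.2

end IsPendantPath

end LeafPath

open LeafPath in
theorem stmt10_general (G : SimpleGraph V) [Fintype V] [DecidableRel G.Adj]
    (hT : G.IsTree) (k : ℕ) (S : Set V) (hS : ThresholdResolving G k S)
    (v : V) (L : ℕ) (hL : 2 ≤ L) (l : Fin L → ℕ)
    (p : (j : Fin L) → Fin (l j + 1) → V)
    (hp : ∀ j, IsLeafPath G v (l j) (p j))
    (hdist : ∀ j j', j ≠ j' → Set.range (p j) ≠ Set.range (p j')) :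
    ∃ jstar : Fin L,
      (∀ j, j ≠ jstar → cbar k (l j) ≤ (S ∩ (Set.range (p j) \ {v})).ncard) ∧
      clow k (l jstar) ≤ (S ∩ (Set.range (p jstar) \ {v})).ncard := by
  have hG := hT.connected
  have hP := fun j => (hp j).isPendantPath
  have : Nonempty (Fin L) := ⟨⟨0, by omega⟩⟩
  obtain ⟨jstar, hnear⟩ := exists_forall_ne_of_pairwise_or fun j j' hjj' =>
    (hP j).near_or_near hG (hP j') hS fun h => hdist j j' hjj' (Fin.range_eq_of_eqOn_clamp h.1 h.2)
  refine ⟨jstar, fun j hj => ?_, ?_⟩ <;>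
    rw [Fin.range_eq_image_clamp, (hP _).ncard_inter_image_diff]
  · exact (hP j).cbar_le_card_sensorPositions hG hS (hnear j hj)
  · exact (hP jstar).clow_le_card_sensorPositions hG hS

/-- all but at most one leaf-path from `v` carries at least its upper
complexity of sensors, and the remaining one carries at least its lower complexity. -/
theorem stmt10 (G : SimpleGraph V) [Fintype V] [DecidableEq V] [DecidableRel G.Adj]
    (hT : G.IsTree) (k : ℕ) (hk : 1 ≤ k) (S : Set V) (hS : ThresholdResolving G k S)
    (v : V) (L : ℕ) (hL : 2 ≤ L) (l : Fin L → ℕ)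
    (p : (j : Fin L) → Fin (l j + 1) → V)
    (hp : ∀ j, IsLeafPath G v (l j) (p j))
    (hdist : ∀ j j', j ≠ j' → Set.range (p j) ≠ Set.range (p j')) :
    ∃ jstar : Fin L,
      (∀ j, j ≠ jstar → cbar k (l j) ≤ (S ∩ (Set.range (p j) \ {v})).ncard) ∧
      clow k (l jstar) ≤ (S ∩ (Set.range (p jstar) \ {v})).ncard :=
  stmt10_general G hT k S hS v L hL l p hp hdist
end

section
/- Let T be a tree with threshold-k resolving set S and let s, s' ∈ S be distinct. Define the attraction A(s,s') as the set of vertices x ∉ S that are directly measured by both s and s', by no other sensor, and are distinguished by {s,s'} from all other vertices not directly measured by sensors outside {s,s'}. Then for every type j with 1 ≤ j ≤ d(s,s') − 1, the number of vertices of type j in A(s,s') is at most k − max{j, d(s,s') − j} + 1; in particular |A(s,s')| ≤ Σ_{j=1}^{d(s,s')−1} (k − max{j, d(s,s') − j} + 1). -/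
open SimpleGraph Finset

variable {V : Type*}

/-!
Fix a tree and two sensors `s ≠ s'` at distance `D`, and write `a = d(s,x)`, `b = d(s',x)`.
Since trees are bipartite, `a - b + D` is even, so the type `j` satisfies `2j = a - b + D` exactly.
A vertex `x` of the attraction is directly measured by both sensors, so neither sensor lies on the
path from the other one to `x`; this forces `1 ≤ j ≤ D - 1`. Vertices of the attraction are
distinguished by `s` and `s'` alone, hence are determined by the pair `(a, b)`, i.e. by `(j, a)`
within a fixed type. Finally `a ≤ k`, `b = a + D - 2j ≤ k` and `a + b ≥ D` confine `a` to an
interval of `k - max j (D - j) + 1` values.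
-/

namespace SimpleGraph

variable {G : SimpleGraph V}

theorem IsTree.even_length_add_dist_add_dist (hT : G.IsTree) (x : V) {u v : V}
    (p : G.Walk u v) : Even (p.length + G.dist x u + G.dist x v) := by
  induction p with
  | nil => simp
  | cons h p ih =>
    obtain ⟨m, hm⟩ := ih
    rw [Walk.length_cons]
    rcases hT.dist_eq_dist_add_one_of_adj x h with h' | h'
    · exact ⟨m + 1, by omega⟩
    · exact ⟨m, by omega⟩

theorem IsTree.even_dist_add_dist_add_dist (hT : G.IsTree) (x u v : V) :
    Even (G.dist u v + G.dist x u + G.dist x v) := by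
  obtain ⟨p, hp⟩ := hT.connected.exists_walk_length_eq_dist u v
  simpa [hp] using hT.even_length_add_dist_add_dist x p

theorem IsTree.two_mul_typ (hT : G.IsTree) (s s' x : V) :
    2 * typ G s s' x = (G.dist s x : ℤ) - G.dist s' x + G.dist s s' := by
  obtain ⟨m, hm⟩ := hT.even_dist_add_dist_add_dist x s s'
  have : G.dist x s = G.dist s x := dist_comm
  have : G.dist x s' = G.dist s' x := dist_comm
  rw [typ]
  omega

theorem IsTree.typ_mem_Icc (hT : G.IsTree) {s s' x : V} (h : ¬ OnPath G s x s')
    (h' : ¬ OnPath G s' x s) : typ G s s' x ∈ Set.Icc 1 ((G.dist s s' : ℤ) - 1) := by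
  unfold OnPath at h h'
  have := hT.two_mul_typ s s' x
  have := hT.connected.dist_triangle (u := s) (v := s') (w := x)
  have := hT.connected.dist_triangle (u := s') (v := s) (w := x)
  have : G.dist s' s = G.dist s s' := dist_comm
  constructor <;> omega

end SimpleGraph

section PairAttraction

variable {G : SimpleGraph V} {k : ℕ} {S : Set V} {s s' x y : V}

theorem eq_of_mem_pairAttraction_of_dist_eq (hx : x ∈ PairAttraction G k S s s')
    (hy : y ∈ PairAttraction G k S s s') (h : G.dist s x = G.dist s y)
    (h' : G.dist s' x = G.dist s' y) : x = y := by
  by_contra hxy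
  rcases hx.2.2.2.2 y (Ne.symm hxy) hy.1 hy.2.2.2.1 with hne | hne
  · exact hne (by rw [dk, dk, h])
  · exact hne (by rw [dk, dk, h'])

theorem typ_mem_Icc_of_mem_pairAttraction (hT : G.IsTree) (hs : s ∈ S) (hs' : s' ∈ S)
    (hne : s ≠ s') (hx : x ∈ PairAttraction G k S s s') :
    typ G s s' x ∈ Set.Icc 1 ((G.dist s s' : ℤ) - 1) :=
  hT.typ_mem_Icc (hx.2.1.2 s' hs' hne.symm) (hx.2.2.1.2 s hs hne)

theorem ncard_pairAttraction_typ_le (hT : G.IsTree) (j : ℕ) :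
    {x | x ∈ PairAttraction G k S s s' ∧ typ G s s' x = (j : ℤ)}.ncard ≤
      k - max j (G.dist s s' - j) + 1 := by
  have hmaps : ∀ x ∈ {x | x ∈ PairAttraction G k S s s' ∧ typ G s s' x = (j : ℤ)},
      G.dist s x ∈ (Finset.Icc j (j + (k - max j (G.dist s s' - j))) : Set ℕ) := by
    rintro x ⟨hx, hj⟩
    have := hT.two_mul_typ s s' x
    have := hT.connected.dist_triangle (u := s) (v := x) (w := s')
    have : G.dist x s' = G.dist s' x := dist_comm
    have := hx.2.1.1
    have := hx.2.2.1.1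
    simp only [Finset.coe_Icc, Set.mem_Icc]
    omega
  have hinj : Set.InjOn (G.dist s ·)
      {x | x ∈ PairAttraction G k S s s' ∧ typ G s s' x = (j : ℤ)} := by
    rintro x ⟨hx, hj⟩ y ⟨hy, hj'⟩ h
    refine eq_of_mem_pairAttraction_of_dist_eq hx hy h ?_
    have := hT.two_mul_typ s s' x
    have := hT.two_mul_typ s s' y
    simp only at h
    omega
  calc _ ≤ (Finset.Icc j (j + (k - max j (G.dist s s' - j))) : Set ℕ).ncard :=
        Set.ncard_le_ncard_of_injOn _ hmaps hinj
    _ = k - max j (G.dist s s' - j) + 1 := by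
        rw [Set.ncard_coe_finset, Nat.card_Icc]
        omega

theorem biUnion_typ_fiber_eq_pairAttraction (hT : G.IsTree) (hs : s ∈ S) (hs' : s' ∈ S)
    (hne : s ≠ s') :
    ⋃ j ∈ Finset.Icc 1 (G.dist s s' - 1),
      {x | x ∈ PairAttraction G k S s s' ∧ typ G s s' x = (j : ℤ)} =
      PairAttraction G k S s s' := by
  ext x
  simp only [Set.mem_iUnion, Set.mem_ofPred_eq, Finset.mem_Icc, exists_prop]
  refine ⟨fun ⟨_, _, hx, _⟩ => hx, fun hx => ?_⟩
  obtain ⟨h1, h2⟩ := typ_mem_Icc_of_mem_pairAttraction hT hs hs' hne hx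
  exact ⟨(typ G s s' x).toNat, by omega, hx, by omega⟩

end PairAttraction

theorem stmt14_general (G : SimpleGraph V) (hT : G.IsTree) (k : ℕ)
    (S : Set V) (s s' : V) (hs : s ∈ S) (hs' : s' ∈ S)
    (hne : s ≠ s') :
    (∀ j : ℕ, 1 ≤ j → j ≤ G.dist s s' - 1 →
      {x | x ∈ PairAttraction G k S s s' ∧ typ G s s' x = (j : ℤ)}.ncard ≤
        k - max j (G.dist s s' - j) + 1) ∧
    (PairAttraction G k S s s').ncard ≤
      ∑ j ∈ Finset.Icc 1 (G.dist s s' - 1), (k - max j (G.dist s s' - j) + 1) := by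
  refine ⟨fun j _ _ => ncard_pairAttraction_typ_le hT j, ?_⟩
  rw [← biUnion_typ_fiber_eq_pairAttraction hT hs hs' hne]
  exact (Finset.set_ncard_biUnion_le _ _).trans
    (Finset.sum_le_sum fun j _ => ncard_pairAttraction_typ_le hT j)

/-- the attraction of a pair of sensors has at most
`k − max{j, d(s,s')−j} + 1` vertices of each type `j`, and hence its size is at most
the corresponding sum. -/
theorem stmt14 (G : SimpleGraph V) [Fintype V] (hT : G.IsTree) (k : ℕ) (hk : 1 ≤ k)
    (S : Set V) (hS : ThresholdResolving G k S) (s s' : V) (hs : s ∈ S) (hs' : s' ∈ S)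
    (hne : s ≠ s') :
    (∀ j : ℕ, 1 ≤ j → j ≤ G.dist s s' - 1 →
      {x | x ∈ PairAttraction G k S s s' ∧ typ G s s' x = (j : ℤ)}.ncard ≤
        k - max j (G.dist s s' - j) + 1) ∧
    (PairAttraction G k S s s').ncard ≤
      ∑ j ∈ Finset.Icc 1 (G.dist s s' - 1), (k - max j (G.dist s s' - j) + 1) :=
  stmt14_general G hT k S s s' hs hs' hne
end

section
/- For every m ≥ 1 and k ≥ 1 with k ≢ 1 (mod 3), there exists a tree T on exactly (k+1)m + (m−1)(k²+k)/3 vertices with Tmd_k(T) = m. Construction: take any tree H on m vertices; replace each vertex of H by a sensor with a pendant path of length k attached, and replace each edge of H by a path with d = 2⌊(k+1)/3⌋ or d = 2k/3 internal vertices (the nearest even integer to (2k+1)/3), where from the internal vertex of type i a pendant path of length min{k−i, k−(d+1−i)} is attached. -/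
open SimpleGraph Finset

variable {V : Type*}

/-!
Take the comb whose spine carries sensors every `2e + 1` vertices, `e = ⌊(k + 1) / 3⌋`, and give
each spine vertex the longest pendant path that keeps it within distance `k` of a sensor on each
side. Such sensors resolve the comb: for two vertices `x`, `y` with `x` no further along the spine,
either `y` is strictly further than `x` from every sensor before `x`, or `x` is strictly further
than `y` from every sensor after `y`, and a sensor on that side within distance `k` of the
closer vertex tells them apart. Conversely the two top vertices of the pendant path of length `k`
at a sensor are separated only by a sensor within one step of its column, and these columns are
at least three apart, so no threshold-`k` resolving set is smaller. Counting vertices gives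
`(k + 1) m + (m - 1) e (2k + 1 - 3e) = (k + 1) m + (m - 1) ⌊(k² + k) / 3⌋`.
-/

namespace SimpleGraph

variable {W : Type*} {G : SimpleGraph V} {H : SimpleGraph W}

theorem Hom.edist_le (f : G →g H) (x y : V) : H.edist (f x) (f y) ≤ G.edist x y := by
  by_cases hxy : G.Reachable x y
  · obtain ⟨w, hw⟩ := hxy.exists_walk_length_eq_edist
    rw [← hw, ← Walk.length_map f]
    exact SimpleGraph.edist_le _
  · rw [edist_eq_top_of_not_reachable hxy]
    exact le_top

theorem Iso.dist_eq (φ : G ≃g H) (x y : V) : H.dist (φ x) (φ y) = G.dist x y := by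
  have hle := φ.symm.toHom.edist_le (φ x) (φ y)
  simp only [RelIso.coe_toRelEmbedding, RelEmbedding.coe_toRelHom, RelIso.symm_apply_apply]
    at hle
  exact congrArg ENat.toNat (le_antisymm (φ.toHom.edist_le x y) hle)

theorem isBridge_of_forall_adj_mem_not_mem {v w : V} (C : Set V) (hv : v ∈ C) (hw : w ∉ C)
    (hC : ∀ a b, G.Adj a b → a ∈ C → b ∉ C → s(a, b) = s(v, w)) : G.IsBridge s(v, w) := by
  rw [isBridge_iff]
  rintro ⟨p⟩
  suffices ∀ {a b : V} (p : (G.deleteEdges {s(v, w)}).Walk a b), a ∈ C → b ∈ C from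
    hw (this p hv)
  intro a b p ha
  induction p with
  | nil => exact ha
  | cons hac _ ih =>
    rw [deleteEdges_adj, Set.mem_singleton_iff] at hac
    exact ih (by_contra fun hc => hac.2 (hC _ _ hac.1 ha hc))

section Descent

variable (D : V → V → ℕ)

theorem exists_walk_length_le_of_descent
    (hdesc : ∀ x y, x ≠ y → ∃ z, G.Adj x z ∧ D z y < D x y) (x y : V) :
    ∃ w : G.Walk x y, w.length ≤ D x y := by
  induction hn : D x y using Nat.strong_induction_on generalizing x with
  | _ n ih =>
    by_cases hxy : x = y
    · subst hxy
      exact ⟨.nil, Nat.zero_le _⟩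
    · obtain ⟨z, hxz, hz⟩ := hdesc x y hxy
      obtain ⟨w, hw⟩ := ih _ (hn ▸ hz) z rfl
      exact ⟨.cons hxz w, by rw [Walk.length_cons]; omega⟩

theorem le_length_of_lipschitz (hself : ∀ x, D x x = 0)
    (hstep : ∀ x z y, G.Adj x z → D x y ≤ D z y + 1) {x y : V} (w : G.Walk x y) :
    D x y ≤ w.length := by
  induction w with
  | nil => rw [hself]; rfl
  | cons hxz _ ih => exact (hstep _ _ _ hxz).trans (by rw [Walk.length_cons]; omega)

theorem dist_eq_of_descent (hself : ∀ x, D x x = 0)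
    (hstep : ∀ x z y, G.Adj x z → D x y ≤ D z y + 1)
    (hdesc : ∀ x y, x ≠ y → ∃ z, G.Adj x z ∧ D z y < D x y) (x y : V) :
    G.dist x y = D x y := by
  obtain ⟨w, hw⟩ := exists_walk_length_le_of_descent D hdesc x y
  obtain ⟨w', hw'⟩ := w.reachable.exists_walk_length_eq_dist
  exact le_antisymm ((dist_le w).trans hw) (hw' ▸ le_length_of_lipschitz D hself hstep w')

end Descent

end SimpleGraph

section Threshold

variable {W : Type*} {G : SimpleGraph V} {H : SimpleGraph W} {k : ℕ}

theorem ThresholdResolving.image (φ : G ≃g H) {S : Set V} (hS : ThresholdResolving G k S) :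
    ThresholdResolving H k (φ '' S) := by
  refine ⟨fun x y hxy => ?_, fun x => ?_⟩
  · obtain ⟨s, hs, hd⟩ := hS.1 (φ.symm x) (φ.symm y) (φ.symm.injective.ne hxy)
    refine ⟨φ s, Set.mem_image_of_mem _ hs, ?_⟩
    rwa [dk, dk, ← φ.apply_symm_apply x, ← φ.apply_symm_apply y, φ.dist_eq, φ.dist_eq]
  · obtain ⟨s, hs, hd⟩ := hS.2 (φ.symm x)
    exact ⟨φ s, Set.mem_image_of_mem _ hs, by rwa [← φ.apply_symm_apply x, φ.dist_eq]⟩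

theorem ThresholdResolving.exists_card_eq_of_iso (φ : G ≃g H) {S : Finset V}
    (hS : ThresholdResolving G k ↑S) :
    ∃ T : Finset W, ThresholdResolving H k ↑T ∧ T.card = S.card :=
  ⟨S.map φ.toEquiv.toEmbedding, by simpa using hS.image φ, S.card_map _⟩

theorem Tmd_congr [Fintype V] [Fintype W] (φ : G ≃g H) : Tmd G k = Tmd H k :=
  congrArg sInf <| Set.ext fun _ =>
    ⟨fun ⟨_, hS, hn⟩ => hn ▸ hS.exists_card_eq_of_iso φ,
      fun ⟨_, hT, hn⟩ => hn ▸ hT.exists_card_eq_of_iso φ.symm⟩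

theorem Tmd_eq_card [Fintype V] {S : Finset V}
    (hS : ThresholdResolving G k ↑S)
    (hmin : ∀ T : Finset V, ThresholdResolving G k ↑T → S.card ≤ T.card) :
    Tmd G k = S.card :=
  le_antisymm (Nat.sInf_le ⟨S, hS, rfl⟩) (le_csInf ⟨_, S, hS, rfl⟩ fun _ ⟨T, hT, hTm⟩ =>
    hTm ▸ hmin T hT)

end Threshold

/-- Vertices of the comb with spine `0, …, P` and a pendant path of length `h p` at each spine
vertex `p`: `⟨p, q⟩` is the vertex at depth `q` below `p`. -/
abbrev CombVert (P : ℕ) (h : ℕ → ℕ) : Type := Σ p : Fin (P + 1), Fin (h p + 1)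

namespace CombVert

variable {P : ℕ} {h : ℕ → ℕ}

theorem eq_iff {x y : CombVert P h} : x = y ↔ (x.1 : ℕ) = y.1 ∧ (x.2 : ℕ) = y.2 := by
  refine ⟨by rintro rfl; exact ⟨rfl, rfl⟩, fun ⟨h₁, h₂⟩ => ?_⟩
  obtain ⟨⟨p, hp⟩, ⟨q, hq⟩⟩ := x
  obtain ⟨⟨p', hp'⟩, ⟨q', hq'⟩⟩ := y
  dsimp only at h₁ h₂
  subst h₁ h₂
  rfl

def of (p q : ℕ) (hp : p ≤ P) (hq : q ≤ h p) : CombVert P h :=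
  ⟨⟨p, Nat.lt_succ_of_le hp⟩, ⟨q, Nat.lt_succ_of_le hq⟩⟩

end CombVert

def comb (P : ℕ) (h : ℕ → ℕ) : SimpleGraph (CombVert P h) where
  Adj x y := ((x.1 : ℕ) = y.1 ∧ ((x.2 : ℕ) + 1 = y.2 ∨ (y.2 : ℕ) + 1 = x.2)) ∨
    ((x.2 : ℕ) = 0 ∧ (y.2 : ℕ) = 0 ∧ ((x.1 : ℕ) + 1 = y.1 ∨ (y.1 : ℕ) + 1 = x.1))
  symm := ⟨fun _ _ h => by omega⟩
  loopless := ⟨fun _ h => by omega⟩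

theorem comb_adj {P : ℕ} {h : ℕ → ℕ} {x y : CombVert P h} : (comb P h).Adj x y ↔
    ((x.1 : ℕ) = y.1 ∧ ((x.2 : ℕ) + 1 = y.2 ∨ (y.2 : ℕ) + 1 = x.2)) ∨
      ((x.2 : ℕ) = 0 ∧ (y.2 : ℕ) = 0 ∧ ((x.1 : ℕ) + 1 = y.1 ∨ (y.1 : ℕ) + 1 = x.1)) :=
  Iff.rfl

def combDist {P : ℕ} {h : ℕ → ℕ} (x y : CombVert P h) : ℕ :=
  if (x.1 : ℕ) = y.1 then (x.2 - y.2 : ℕ) + (y.2 - x.2 : ℕ)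
  else (x.1 - y.1 : ℕ) + (y.1 - x.1 : ℕ) + x.2 + y.2

section Comb

variable {P : ℕ} {h : ℕ → ℕ}

theorem combDist_le_of_adj {x z : CombVert P h} (hxz : (comb P h).Adj x z) (y : CombVert P h) :
    combDist x y ≤ combDist z y + 1 := by
  rw [comb_adj] at hxz
  unfold combDist
  split_ifs <;> omega

theorem exists_adj_combDist_lt {x y : CombVert P h} (hxy : x ≠ y) :
    ∃ z, (comb P h).Adj x z ∧ combDist z y < combDist x y := by
  obtain ⟨⟨p, hp⟩, ⟨q, hq⟩⟩ := x
  obtain ⟨⟨p', hp'⟩, ⟨q', hq'⟩⟩ := y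
  rw [Ne, CombVert.eq_iff] at hxy
  simp only at hxy hq hq'
  simp only [comb_adj, combDist]
  by_cases hup : p = p' ∧ q < q'
  · obtain ⟨rfl, hlt⟩ := hup
    refine ⟨CombVert.of p (q + 1) (by omega) (by omega), ?_⟩
    dsimp only [CombVert.of]
    split_ifs <;> omega
  by_cases hdown : 0 < q
  · refine ⟨CombVert.of p (q - 1) (by omega) (by omega), ?_⟩
    dsimp only [CombVert.of]
    split_ifs <;> omega
  by_cases hright : p < p'
  · refine ⟨CombVert.of (p + 1) 0 (by omega) (Nat.zero_le _), ?_⟩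
    dsimp only [CombVert.of]
    split_ifs <;> omega
  · refine ⟨CombVert.of (p - 1) 0 (by omega) (Nat.zero_le _), ?_⟩
    dsimp only [CombVert.of]
    split_ifs <;> omega

theorem comb_dist (x y : CombVert P h) : (comb P h).dist x y = combDist x y :=
  SimpleGraph.dist_eq_of_descent combDist (fun x => by simp [combDist])
    (fun _ _ y hxz => combDist_le_of_adj hxz y) (fun _ _ => exists_adj_combDist_lt) x y

theorem comb_connected : (comb P h).Connected where
  preconnected x y :=
    (SimpleGraph.exists_walk_length_le_of_descent combDist
      (fun _ _ => exists_adj_combDist_lt) x y).choose.reachable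
  nonempty := ⟨CombVert.of 0 0 (Nat.zero_le _) (Nat.zero_le _)⟩

/-- `x` is the parent of `z` when rooting the comb at the start of its spine. -/
def IsCombParent (x z : CombVert P h) : Prop :=
  ((x.1 : ℕ) = z.1 ∧ (x.2 : ℕ) + 1 = z.2) ∨ ((x.2 : ℕ) = 0 ∧ (z.2 : ℕ) = 0 ∧ (x.1 : ℕ) + 1 = z.1)

theorem comb_isBridge_of_isCombParent {x z : CombVert P h} (hxz : IsCombParent x z) :
    (comb P h).IsBridge s(z, x) := by
  refine SimpleGraph.isBridge_of_forall_adj_mem_not_mem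
    {y | ((z.2 : ℕ) = 0 ∧ (z.1 : ℕ) ≤ y.1) ∨ ((y.1 : ℕ) = z.1 ∧ (z.2 : ℕ) ≤ y.2)}
    (by simp) (by simp only [IsCombParent] at hxz; simp only [Set.mem_ofPred_eq]; omega) ?_
  intro a b hab ha hb
  rw [comb_adj] at hab
  simp only [IsCombParent] at hxz
  simp only [Set.mem_ofPred_eq] at ha hb
  rw [(CombVert.eq_iff.mpr ⟨by omega, by omega⟩ : a = z),
    (CombVert.eq_iff.mpr ⟨by omega, by omega⟩ : b = x)]

theorem comb_isTree : (comb P h).IsTree := by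
  refine ⟨comb_connected, SimpleGraph.isAcyclic_iff_forall_adj_isBridge.mpr fun x z hxz => ?_⟩
  rw [comb_adj] at hxz
  rcases (by unfold IsCombParent; omega :
      IsCombParent x z ∨ IsCombParent z x) with hp | hp
  · rw [Sym2.eq_swap]
    exact comb_isBridge_of_isCombParent hp
  · exact comb_isBridge_of_isCombParent hp

theorem card_combVert : Fintype.card (CombVert P h) = ∑ p ∈ Finset.range (P + 1), (h p + 1) := by
  simp [Fintype.card_sigma, Fin.sum_univ_eq_sum_range (fun p => h p + 1)]

end Comb

section SpineSensors

variable {P : ℕ} {h : ℕ → ℕ} {k : ℕ}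

def spineVert (P : ℕ) (h : ℕ → ℕ) : Fin (P + 1) ↪ CombVert P h :=
  ⟨fun a => ⟨a, 0⟩, fun _ _ hab => (Sigma.mk.inj_iff.mp hab).1⟩

theorem spineVert_apply (a : Fin (P + 1)) : spineVert P h a = ⟨a, 0⟩ := rfl

theorem comb_dist_spineVert (a : Fin (P + 1)) (x : CombVert P h) :
    (comb P h).dist (spineVert P h a) x = (a - x.1 : ℕ) + (x.1 - a : ℕ) + x.2 := by
  rw [spineVert_apply, comb_dist, combDist]
  dsimp only
  rw [Fin.val_zero]
  split_ifs <;> omega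

theorem comb_thresholdResolving (A : Finset (Fin (P + 1)))
    (hleft : ∀ x : CombVert P h, ∃ a ∈ A, (a : ℕ) ≤ x.1 ∧ (x.1 - a : ℕ) + x.2 ≤ k)
    (hright : ∀ x : CombVert P h, ∃ a ∈ A, (x.1 : ℕ) ≤ a ∧ (a - x.1 : ℕ) + x.2 ≤ k) :
    ThresholdResolving (comb P h) k ↑(A.map (spineVert P h)) := by
  refine ⟨fun x y hxy => ?_, fun x => ?_⟩
  · wlog hle : (x.1 : ℕ) ≤ y.1 generalizing x y
    · obtain ⟨s, hs, hd⟩ := this y x hxy.symm (by omega)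
      exact ⟨s, hs, hd.symm⟩
    rw [Ne, CombVert.eq_iff] at hxy
    by_cases hcloser : (x.2 : ℕ) < (y.1 - x.1 : ℕ) + y.2
    · obtain ⟨a, ha, hax, hak⟩ := hleft x
      refine ⟨spineVert P h a, by simpa using ha, ?_⟩
      rw [dk, dk, comb_dist_spineVert, comb_dist_spineVert]
      omega
    · obtain ⟨a, ha, hay, hak⟩ := hright y
      refine ⟨spineVert P h a, by simpa using ha, ?_⟩
      rw [dk, dk, comb_dist_spineVert, comb_dist_spineVert]
      omega
  · obtain ⟨a, ha, hax, hak⟩ := hleft x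
    refine ⟨spineVert P h a, by simpa using ha, ?_⟩
    rw [comb_dist_spineVert]
    omega

theorem card_le_of_comb_thresholdResolving (hk : 1 ≤ k) (A : Finset (Fin (P + 1)))
    (htall : ∀ a ∈ A, k ≤ h a) (hsep : ∀ a ∈ A, ∀ b ∈ A, (a : ℕ) < b → (a : ℕ) + 3 ≤ b)
    {S : Finset (CombVert P h)} (hS : ThresholdResolving (comb P h) k ↑S) :
    A.card ≤ S.card := by
  refine Finset.card_le_card_of_forall_subsingleton
    (fun (a : Fin (P + 1)) (s : CombVert P h) => (s.1 : ℕ) ≤ a + 1 ∧ (a : ℕ) ≤ s.1 + 1)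
    (fun a ha => ?_) (fun s _ a ha b hb => ?_)
  · obtain ⟨s, hs, hd⟩ := hS.1 ⟨a, ⟨k, by have := htall a ha; omega⟩⟩
      ⟨a, ⟨k - 1, by have := htall a ha; omega⟩⟩ (by rw [Ne, CombVert.eq_iff]; dsimp only; omega)
    refine ⟨s, hs, ?_⟩
    rw [dk, dk, comb_dist, comb_dist, combDist, combDist] at hd
    dsimp only at hd
    split_ifs at hd <;> omega
  · have := hsep a ha.1 b hb.1
    have := hsep b hb.1 a ha.1
    have := ha.2
    have := hb.2
    exact Fin.ext (by omega)

end SpineSensors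

theorem Function.Periodic.sum_range_mul {M : Type*} [AddCommMonoid M] {f : ℕ → M} {c : ℕ}
    (hf : Function.Periodic f c) (n : ℕ) :
    ∑ p ∈ Finset.range (c * n), f p = n • ∑ p ∈ Finset.range c, f p := by
  induction n with
  | zero => simp
  | succ n ih =>
    rw [Nat.mul_succ, Finset.sum_range_add, ih, succ_nsmul]
    congr 1
    refine Finset.sum_congr rfl fun j _ => ?_
    rw [add_comm, mul_comm]
    exact hf.nat_mul n j

section SensorComb

variable (k e m : ℕ)

/-- Sensors sit at the multiples of `2e+1` on the spine; the spine vertex at distance `i` from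
the previous sensor (the internal vertex of type `i` of a sensor path with `d = 2e`) carries a
pendant path of length `k - max i (2e+1-i)`, the longest one that keeps it within distance `k`
of both neighbouring sensors. -/
def pendantLen (p : ℕ) : ℕ :=
  if p % (2 * e + 1) = 0 then k else k - max (p % (2 * e + 1)) (2 * e + 1 - p % (2 * e + 1))

abbrev sensorComb : SimpleGraph (CombVert ((2 * e + 1) * (m - 1)) (pendantLen k e)) := comb _ _

def sensorFeet : Finset (Fin ((2 * e + 1) * (m - 1) + 1)) :=
  Finset.univ.map ⟨fun j : Fin m => ⟨(2 * e + 1) * j,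
      Nat.lt_succ_of_le (Nat.mul_le_mul_left _ (Nat.le_sub_one_of_lt j.isLt))⟩,
    fun _ _ hij => Fin.ext (Nat.eq_of_mul_eq_mul_left (Nat.succ_pos _) (Fin.mk.inj_iff.mp hij))⟩

variable {k e m}

theorem exists_mem_sensorFeet {j : ℕ} (hj : j < m) :
    ∃ a ∈ sensorFeet e m, (a : ℕ) = (2 * e + 1) * j :=
  ⟨_, Finset.mem_map_of_mem _ (Finset.mem_univ ⟨j, hj⟩), rfl⟩

theorem mem_sensorFeet {a : Fin ((2 * e + 1) * (m - 1) + 1)} (ha : a ∈ sensorFeet e m) :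
    ∃ j, (a : ℕ) = (2 * e + 1) * j := by
  obtain ⟨j, -, rfl⟩ := Finset.mem_map.mp ha
  exact ⟨j, rfl⟩

theorem pendantLen_of_mem_sensorFeet {a : Fin ((2 * e + 1) * (m - 1) + 1)}
    (ha : a ∈ sensorFeet e m) : pendantLen k e a = k := by
  obtain ⟨j, hj⟩ := mem_sensorFeet ha
  rw [pendantLen, hj, Nat.mul_mod_right, if_pos rfl]

theorem sensorFeet_sep (he : 1 ≤ e) {a b : Fin ((2 * e + 1) * (m - 1) + 1)}
    (ha : a ∈ sensorFeet e m) (hb : b ∈ sensorFeet e m) (hab : (a : ℕ) < b) :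
    (a : ℕ) + 3 ≤ b := by
  obtain ⟨i, hi⟩ := mem_sensorFeet ha
  obtain ⟨j, hj⟩ := mem_sensorFeet hb
  have hij : i + 1 ≤ j := by
    by_contra hji
    exact absurd (Nat.mul_le_mul_left (2 * e + 1) (by omega : j ≤ i)) (by omega)
  have := Nat.mul_le_mul_left (2 * e + 1) hij
  rw [Nat.mul_succ] at this
  omega

theorem add_le_of_le_pendantLen (h2e : 2 * e ≤ k) {t r q : ℕ} (hr : r < 2 * e + 1)
    (hq : q ≤ pendantLen k e ((2 * e + 1) * t + r)) :
    r + q ≤ k ∧ (r ≠ 0 → 2 * e + 1 - r + q ≤ k) := by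
  rw [pendantLen, Nat.mul_add_mod, Nat.mod_eq_of_lt hr] at hq
  split_ifs at hq <;> omega

theorem lt_of_mul_add_le_mul_pred (hm : 1 ≤ m) {t r : ℕ}
    (hp : (2 * e + 1) * t + r ≤ (2 * e + 1) * (m - 1)) : t < m ∧ (r ≠ 0 → t + 1 < m) := by
  refine ⟨?_, fun hr => ?_⟩
  · have := Nat.le_of_mul_le_mul_left (by omega : (2 * e + 1) * t ≤ (2 * e + 1) * (m - 1))
      (Nat.succ_pos _)
    omega
  · have := Nat.lt_of_mul_lt_mul_left (by omega : (2 * e + 1) * t < (2 * e + 1) * (m - 1))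
    omega

theorem exists_sensorFeet_near (hm : 1 ≤ m) (h2e : 2 * e ≤ k)
    (x : CombVert ((2 * e + 1) * (m - 1)) (pendantLen k e)) :
    (∃ a ∈ sensorFeet e m, (a : ℕ) ≤ x.1 ∧ (x.1 - a : ℕ) + x.2 ≤ k) ∧
      ∃ a ∈ sensorFeet e m, (x.1 : ℕ) ≤ a ∧ (a - x.1 : ℕ) + x.2 ≤ k := by
  obtain ⟨⟨p, hp⟩, ⟨q, hq⟩⟩ := x
  dsimp only
  have hdecomp := Nat.div_add_mod p (2 * e + 1)
  have hr : p % (2 * e + 1) < 2 * e + 1 := Nat.mod_lt _ (Nat.succ_pos _)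
  generalize p / (2 * e + 1) = t, p % (2 * e + 1) = r at hdecomp hr
  subst hdecomp
  obtain ⟨hleft, hright⟩ := add_le_of_le_pendantLen h2e hr (Nat.le_of_lt_succ hq)
  obtain ⟨ht, ht'⟩ := lt_of_mul_add_le_mul_pred hm (Nat.le_of_lt_succ hp)
  obtain ⟨a, ha, hav⟩ := exists_mem_sensorFeet (e := e) ht
  refine ⟨⟨a, ha, by omega⟩, ?_⟩
  by_cases hr0 : r = 0
  · exact ⟨a, ha, by omega⟩
  · obtain ⟨b, hb, hbv⟩ := exists_mem_sensorFeet (e := e) (ht' hr0)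
    rw [Nat.mul_succ] at hbv
    exact ⟨b, hb, by omega⟩

theorem tmd_sensorComb (hk : 1 ≤ k) (he : 1 ≤ e) (h2e : 2 * e ≤ k) (hm : 1 ≤ m) :
    Tmd (sensorComb k e m) k = m := by
  have hcard : ((sensorFeet e m).map (spineVert _ (pendantLen k e))).card = m := by
    simp [sensorFeet]
  refine (Tmd_eq_card (comb_thresholdResolving _ (exists_sensorFeet_near hm h2e · |>.1)
    (exists_sensorFeet_near hm h2e · |>.2)) fun T hT => ?_).trans hcard
  rw [Finset.card_map]
  exact card_le_of_comb_thresholdResolving hk _ (fun a ha => (pendantLen_of_mem_sensorFeet ha).ge)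
    (fun a ha b hb => sensorFeet_sep he ha hb) hT

theorem sum_range_pendantLen (h2e : 2 * e ≤ k) :
    ∑ p ∈ Finset.range (2 * e + 1), (pendantLen k e p + 1) =
      (k + 1) + e * (2 * k + 1 - 3 * e) := by
  have hinner : ∀ i < 2 * e, pendantLen k e (i + 1) + 1 = k + 1 - max (i + 1) (2 * e - i) := by
    intro i hi
    rw [pendantLen, Nat.mod_eq_of_lt (by omega), if_neg (by omega)]
    omega
  rw [Finset.sum_range_succ', pendantLen, Nat.zero_mod, if_pos rfl, add_comm]
  congr 1
  -- the pendant paths at positions `i + 1` and `e + i + 1` together have `2k + 1 - 3e` vertices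
  calc ∑ i ∈ Finset.range (2 * e), (pendantLen k e (i + 1) + 1)
      = ∑ i ∈ Finset.range (e + e), (k + 1 - max (i + 1) (2 * e - i)) :=
        Finset.sum_congr (by rw [two_mul]) fun i hi =>
          hinner i (by have := Finset.mem_range.mp hi; omega)
    _ = ∑ i ∈ Finset.range e,
          ((k + 1 - max (i + 1) (2 * e - i)) + (k + 1 - max (e + i + 1) (2 * e - (e + i)))) := by
        rw [Finset.sum_range_add, Finset.sum_add_distrib]
    _ = ∑ _i ∈ Finset.range e, (2 * k + 1 - 3 * e) :=
        Finset.sum_congr rfl fun i hi => by have := Finset.mem_range.mp hi; omega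
    _ = e * (2 * k + 1 - 3 * e) := by rw [Finset.sum_const, Finset.card_range, smul_eq_mul]

theorem card_sensorComb (h2e : 2 * e ≤ k) (hm : 1 ≤ m) :
    Fintype.card (CombVert ((2 * e + 1) * (m - 1)) (pendantLen k e)) =
      (k + 1) * m + (m - 1) * (e * (2 * k + 1 - 3 * e)) := by
  have hper : Function.Periodic (fun p => pendantLen k e p + 1) (2 * e + 1) := fun p => by
    simp only [pendantLen, Nat.add_mod_right]
  rw [card_combVert, Finset.sum_range_succ, hper.sum_range_mul, sum_range_pendantLen h2e,
    pendantLen, Nat.mul_mod_right, if_pos rfl, smul_eq_mul]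
  obtain ⟨n, rfl⟩ : ∃ n, m = n + 1 := ⟨m - 1, by omega⟩
  rw [Nat.add_sub_cancel]
  ring

end SensorComb

theorem sq_add_self_div_three (k : ℕ) :
    (k ^ 2 + k) / 3 = (k + 1) / 3 * (2 * k + 1 - 3 * ((k + 1) / 3)) := by
  obtain ⟨n, rfl | rfl | rfl⟩ : ∃ n, k = 3 * n ∨ k = 3 * n + 1 ∨ k = 3 * n + 2 :=
    ⟨k / 3, by omega⟩
  · rw [show (3 * n + 1) / 3 = n by omega, show 2 * (3 * n) + 1 - 3 * n = 3 * n + 1 by omega,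
      show (3 * n) ^ 2 + 3 * n = 3 * (n * (3 * n + 1)) by ring, Nat.mul_div_cancel_left _ three_pos]
  · rw [show (3 * n + 1 + 1) / 3 = n by omega,
      show 2 * (3 * n + 1) + 1 - 3 * n = 3 * n + 3 by omega,
      show (3 * n + 1) ^ 2 + (3 * n + 1) = 3 * (n * (3 * n + 3)) + 2 by ring,
      Nat.mul_add_div three_pos]
    rfl
  · rw [show (3 * n + 2 + 1) / 3 = n + 1 by omega,
      show 2 * (3 * n + 2) + 1 - 3 * (n + 1) = 3 * n + 2 by omega,
      show (3 * n + 2) ^ 2 + (3 * n + 2) = 3 * ((n + 1) * (3 * n + 2)) by ring,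
      Nat.mul_div_cancel_left _ three_pos]

/-- for `k ≢ 1 (mod 3)` there exists a tree on exactly
`(k+1)m + (m−1)(k²+k)/3` vertices with threshold-k metric dimension `m`. -/
theorem stmt16 (k m : ℕ) (hk : 1 ≤ k) (hm : 1 ≤ m) (hk3 : k % 3 ≠ 1) :
    ∃ G : SimpleGraph (Fin ((k + 1) * m + (m - 1) * ((k ^ 2 + k) / 3))),
      G.IsTree ∧ Tmd G k = m := by
  set e := (k + 1) / 3
  have he1 : 1 ≤ e := by omega
  have h2e : 2 * e ≤ k := by omega
  have hcard : Fintype.card (CombVert ((2 * e + 1) * (m - 1)) (pendantLen k e)) =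
      (k + 1) * m + (m - 1) * ((k ^ 2 + k) / 3) := by
    rw [card_sensorComb h2e hm, sq_add_self_div_three k]
  let φ := SimpleGraph.Iso.map (Fintype.equivFinOfCardEq hcard) (sensorComb k e m)
  exact ⟨_, φ.isTree_iff.mp comb_isTree, (Tmd_congr φ).symm.trans (tmd_sensorComb hk he1 h2e hm)⟩
end

section
/- Let T be a path on n vertices (a tree with exactly two leaves) and k ≥ 1. Write n − 1 = q(3k+2) + r with 0 ≤ r ≤ 3k+1. Then any threshold-k resolving set of T has size at least 2q + [r ≥ k+1] + [r ≥ 2k+2] when r ≥ 1, i.e., the minimum number of sensors is at least the lower complexity c̲(n−1) of a path of length n−1 (for n ≥ 2). -/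
section Aux

lemma pathAux_walk_exists (n : ℕ) (G : SimpleGraph (Fin n))
    (hpath : ∀ x y : Fin n, G.Adj x y ↔ ((x : ℕ) + 1 = (y : ℕ) ∨ (y : ℕ) + 1 = (x : ℕ))) :
    ∀ d (x y : Fin n), (y : ℕ) = x + d → ∃ w : G.Walk x y, w.length = d := by
  intro d
  induction d with
  | zero =>
    intro x y h
    have : x = y := Fin.ext (by omega)
    subst this; exact ⟨.nil, rfl⟩
  | succ d ih =>
    intro x y h
    have hx1 : (x : ℕ) + 1 < n := by have := y.isLt; omega
    have hadj : G.Adj x ⟨(x : ℕ) + 1, hx1⟩ := (hpath x ⟨(x : ℕ) + 1, hx1⟩).2 (Or.inl rfl)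
    obtain ⟨w, hw⟩ := ih ⟨(x : ℕ) + 1, hx1⟩ y (by simp; omega)
    exact ⟨.cons hadj w, by simp [hw]⟩

lemma pathAux_walk_ge (n : ℕ) (G : SimpleGraph (Fin n))
    (hpath : ∀ x y : Fin n, G.Adj x y ↔ ((x : ℕ) + 1 = (y : ℕ) ∨ (y : ℕ) + 1 = (x : ℕ)))
    {x y : Fin n} (w : G.Walk x y) : Nat.dist (x : ℕ) (y : ℕ) ≤ w.length := by
  induction w with
  | nil => simp [Nat.dist_self]
  | @cons a b c h p ih =>
    have h1 : Nat.dist (a : ℕ) (b : ℕ) ≤ 1 := by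
      rcases (hpath a b).1 h with h' | h' <;> simp [Nat.dist] <;> omega
    calc Nat.dist (a : ℕ) (c : ℕ) ≤ Nat.dist (a : ℕ) (b : ℕ) + Nat.dist (b : ℕ) (c : ℕ) :=
          Nat.dist.triangle_inequality _ _ _
      _ ≤ 1 + p.length := by omega
      _ = (SimpleGraph.Walk.cons h p).length := by simp [SimpleGraph.Walk.length_cons]; omega

lemma pathAux_dist (n : ℕ) (G : SimpleGraph (Fin n))
    (hpath : ∀ x y : Fin n, G.Adj x y ↔ ((x : ℕ) + 1 = (y : ℕ) ∨ (y : ℕ) + 1 = (x : ℕ)))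
    (x y : Fin n) : G.dist x y = Nat.dist (x : ℕ) (y : ℕ) := by
  rcases le_total (x : ℕ) (y : ℕ) with hle | hle
  · obtain ⟨w, hw⟩ := pathAux_walk_exists n G hpath ((y : ℕ) - (x : ℕ)) x y (by omega)
    have hub : G.dist x y ≤ Nat.dist (x : ℕ) (y : ℕ) := by
      have := SimpleGraph.dist_le w
      simpa [hw, Nat.dist, Nat.sub_eq_zero_of_le hle] using this
    have hreach : G.Reachable x y := ⟨w⟩
    obtain ⟨p, hp⟩ := hreach.exists_walk_length_eq_dist
    have := pathAux_walk_ge n G hpath p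
    omega
  · rw [SimpleGraph.dist_comm, Nat.dist_comm]
    obtain ⟨w, hw⟩ := pathAux_walk_exists n G hpath ((x : ℕ) - (y : ℕ)) y x (by omega)
    have hub : G.dist y x ≤ Nat.dist (y : ℕ) (x : ℕ) := by
      have := SimpleGraph.dist_le w
      simpa [hw, Nat.dist, Nat.sub_eq_zero_of_le hle] using this
    have hreach : G.Reachable y x := ⟨w⟩
    obtain ⟨p, hp⟩ := hreach.exists_walk_length_eq_dist
    have := pathAux_walk_ge n G hpath p
    omega

lemma chainAux_bound (k m : ℕ) (v : ℕ → ℕ) (h0 : v 0 ≤ k) (h1 : 2 ≤ m → v 1 ≤ 2*k+1)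
    (hp : ∀ i, i + 2 < m → v (i+2) ≤ v i + (3*k+2)) :
    ∀ i, i < m → v i ≤ k + (i % 2) * (k+1) + (i / 2) * (3*k+2) := by
  intro i
  induction i using Nat.strong_induction_on with
  | _ i ih =>
    intro him
    match i with
    | 0 => simpa using h0
    | 1 =>
      have := h1 (by omega)
      simp; omega
    | (j+2) =>
      have hj := ih j (by omega) (by omega)
      have hstep := hp j him
      have hmod : (j+2) % 2 = j % 2 := by omega
      have hdiv : (j+2)/2 = j/2 + 1 := by omega
      rw [hmod, hdiv, add_mul, one_mul]
      omega

end Aux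



open SimpleGraph Finset

variable {V : Type*}

lemma clowAux_le (k m ℓ : ℕ) (h : ℓ ≤ m/2 * (3*k+2) + k) : clow k ℓ ≤ m := by
  have hD : 0 < 3*k+2 := by omega
  have hd := Nat.div_add_mod ℓ (3*k+2)
  have hq : ℓ / (3*k+2) ≤ m / 2 := by
    have h2 : ℓ / (3*k+2) ≤ (m/2 * (3*k+2) + k) / (3*k+2) := Nat.div_le_div_right h
    have h3 : (m/2 * (3*k+2) + k)/(3*k+2) = m/2 + k/(3*k+2) := by
      rw [mul_comm, Nat.mul_add_div hD]
    have h4 : k / (3*k+2) = 0 := Nat.div_eq_of_lt (by omega)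
    omega
  unfold clow
  set q := ℓ / (3*k+2) with hqdef
  set r := ℓ % (3*k+2) with hrdef
  rcases lt_or_eq_of_le hq with hlt | heq
  · split_ifs <;> omega
  · have hrk : r ≤ k := by
      have hc : m/2 * (3*k+2) = (3*k+2) * (m/2) := mul_comm _ _
      rw [hc, ← heq] at h
      omega
    split_ifs <;> omega

/-- any threshold-k resolving set of a path on `n ≥ 2` vertices has
size at least the lower complexity of a path of length `n − 1`. -/
theorem stmt17 (n : ℕ) (hn : 2 ≤ n) (k : ℕ) (hk : 1 ≤ k)
    (G : SimpleGraph (Fin n))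
    (hpath : ∀ x y : Fin n, G.Adj x y ↔ ((x : ℕ) + 1 = (y : ℕ) ∨ (y : ℕ) + 1 = (x : ℕ)))
    (S : Set (Fin n)) (hS : ThresholdResolving G k S) :
    clow k (n - 1) ≤ S.ncard := by
  classical
  have hdist : ∀ x y : Fin n, G.dist x y = Nat.dist (x:ℕ) (y:ℕ) := pathAux_dist n G hpath
  have hcard : S.ncard = S.toFinset.card := Set.ncard_eq_toFinset_card' S
  rw [hcard]
  set F : Finset (Fin n) := S.toFinset with hF
  set m := F.card with hm
  set e := F.orderIsoOfFin hm.symm with he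
  set w : ℕ → ℕ := fun i => if h : i < m then ((e ⟨i, h⟩ : Fin n) : ℕ) else 0 with hwdef
  have hw_eq : ∀ i (h : i < m), w i = ((e ⟨i, h⟩ : Fin n) : ℕ) := fun i h => dif_pos h
  have hw_lt : ∀ i, i < m → w i < n := by
    intro i h; rw [hw_eq i h]; exact (e ⟨i, h⟩ : Fin n).isLt
  have hw_mono : ∀ i j, i < j → ∀ hj : j < m, w i < w j := by
    intro i j hij hj
    rw [hw_eq i (lt_trans hij hj), hw_eq j hj]
    have h1 : e ⟨i, lt_trans hij hj⟩ < e ⟨j, hj⟩ := (OrderIso.lt_iff_lt e).2 (Fin.mk_lt_mk.2 hij)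
    exact h1
  have hw_le : ∀ i j, i ≤ j → ∀ hj : j < m, w i ≤ w j := by
    intro i j hij hj
    rcases lt_or_eq_of_le hij with h | h
    · exact le_of_lt (hw_mono i j h hj)
    · subst h; exact le_rfl
  have hsurj : ∀ s ∈ S, ∃ i, ∃ h : i < m, w i = (s : ℕ) := by
    intro s hs
    have hsF : s ∈ F := Set.mem_toFinset.2 hs
    refine ⟨(e.symm ⟨s, hsF⟩ : Fin m), (e.symm ⟨s, hsF⟩).isLt, ?_⟩
    rw [hw_eq _ (e.symm ⟨s, hsF⟩).isLt, Fin.eta, OrderIso.apply_symm_apply]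
  have ncov : ∀ t : ℕ, t < n → ∃ i, ∃ h : i < m, Nat.dist (w i) t ≤ k := by
    intro t ht
    obtain ⟨s, hsS, hsd⟩ := hS.2 ⟨t, ht⟩
    rw [hdist] at hsd
    obtain ⟨i, hi, hwi⟩ := hsurj s hsS
    exact ⟨i, hi, by rw [hwi]; exact hsd⟩
  have hm1 : 1 ≤ m := by
    obtain ⟨i, hi, _⟩ := ncov 0 (by omega); omega
  have nres : ∀ i, (i < m) → ∀ d : ℕ, 1 ≤ d → d ≤ k → d ≤ w i → w i + d ≤ n - 1 →
      ∃ j, ∃ hj : j < m, j ≠ i ∧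
        (Nat.dist (w j) (w i - d) ≤ k ∨ Nat.dist (w j) (w i + d) ≤ k) := by
    intro i hi d hd1 hdk hdle hdla
    have hxlt : w i - d < n := lt_of_le_of_lt (Nat.sub_le _ _) (hw_lt i hi)
    have hylt : w i + d < n := by omega
    have hxy : (⟨w i - d, hxlt⟩ : Fin n) ≠ ⟨w i + d, hylt⟩ := by
      intro hcon
      have := congrArg Fin.val hcon
      simp at this
      omega
    obtain ⟨s, hsS, hsne⟩ := hS.1 _ _ hxy
    simp only [dk] at hsne
    rw [hdist, hdist] at hsne
    obtain ⟨j, hj, hwj⟩ := hsurj s hsS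
    refine ⟨j, hj, ?_, ?_⟩
    · intro hje
      rw [hje] at hwj
      apply hsne
      have hsv : (s : ℕ) = w i := hwj.symm
      rw [show ((⟨w i - d, hxlt⟩ : Fin n) : ℕ) = w i - d from rfl,
        show ((⟨w i + d, hylt⟩ : Fin n) : ℕ) = w i + d from rfl]
      have e1 : Nat.dist (s : ℕ) (w i - d) = d := by simp only [Nat.dist, hsv]; omega
      have e2 : Nat.dist (s : ℕ) (w i + d) = d := by simp only [Nat.dist, hsv]; omega
      rw [e1, e2]
    · by_contra hcon
      push_neg at hcon
      obtain ⟨h1, h2⟩ := hcon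
      rw [hwj] at h1 h2
      apply hsne
      rw [show ((⟨w i - d, hxlt⟩ : Fin n) : ℕ) = w i - d from rfl,
        show ((⟨w i + d, hylt⟩ : Fin n) : ℕ) = w i + d from rfl]
      have hws : w j = (s : ℕ) := hwj
      have e1 : min (Nat.dist (s : ℕ) (w i - d)) (k+1) = k + 1 :=
        min_eq_right (by simp [Nat.dist] at h1 ⊢; omega)
      have e2 : min (Nat.dist (s : ℕ) (w i + d)) (k+1) = k + 1 :=
        min_eq_right (by simp [Nat.dist] at h2 ⊢; omega)
      rw [e1, e2]
  have f1 : w 0 ≤ k := by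
    obtain ⟨i, hi, hdi⟩ := ncov 0 (by omega)
    have h1 : w 0 ≤ w i := hw_le 0 i (Nat.zero_le _) hi
    simp only [Nat.dist] at hdi
    omega
  have f2 : n - 1 ≤ w (m-1) + k := by
    obtain ⟨i, hi, hdi⟩ := ncov (n-1) (by omega)
    have h1 : w i ≤ w (m-1) := hw_le i (m-1) (by omega) (by omega)
    simp only [Nat.dist] at hdi
    omega
  have f3 : ∀ i, i + 1 < m → w (i+1) ≤ w i + (2*k+1) := by
    intro i hi1
    by_contra hcon
    push_neg at hcon
    have hwlt := hw_lt (i+1) hi1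
    obtain ⟨j, hj, hdj⟩ := ncov (w i + k + 1) (by omega)
    simp only [Nat.dist] at hdj
    rcases le_or_gt j i with hji | hji
    · have := hw_le j i hji (by omega)
      omega
    · have := hw_le (i+1) j hji hj
      omega
  have f4 : ∀ i, i + 2 < m → w (i+2) ≤ w i + (3*k+2) := by
    intro i hi2
    have g1 := f3 i (by omega)
    have g2 := f3 (i+1) (by omega)
    have eidx : i + 1 + 1 = i + 2 := by omega
    rw [eidx] at g2
    rcases le_or_gt (w (i+1)) (w i + (k+1)) with hc | hc
    · omega
    · by_contra hcon
      push_neg at hcon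
      have hg2 : w (i+1) + (k+2) ≤ w (i+2) := by omega
      have hwlt2 := hw_lt (i+2) hi2
      have hmono01 := hw_mono i (i+1) (by omega) (by omega)
      obtain ⟨j, hj, hjne, hd⟩ := nres (i+1) (by omega) 1 le_rfl hk (by omega) (by omega)
      rcases le_or_gt j i with hji | hji
      · have hle1 := hw_le j i hji (by omega)
        rcases hd with hd | hd <;> (simp only [Nat.dist] at hd; omega)
      · have hji2 : i + 2 ≤ j := by omega
        have hle2 := hw_le (i+2) j hji2 hj
        rcases hd with hd | hd <;> (simp only [Nat.dist] at hd; omega)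
  have f5 : 2 ≤ m → w 1 ≤ 2*k+1 := by
    intro hm2
    by_contra hcon
    push_neg at hcon
    have g1 := f3 0 (by omega)
    have eidx : 0 + 1 = 1 := by omega
    rw [eidx] at g1
    have hw1lt := hw_lt 1 (by omega)
    have hm01 := hw_mono 0 1 (by omega) (by omega)
    obtain ⟨j, hj, hjne, hd⟩ := nres 0 (by omega) 1 le_rfl hk (by omega) (by omega)
    have hj1 : 1 ≤ j := by omega
    have hle := hw_le 1 j hj1 hj
    rcases hd with hd | hd <;> (simp only [Nat.dist] at hd; omega)
  have f6 : 2 ≤ m → n - 1 ≤ w (m-2) + (2*k+1) := by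
    intro hm2
    by_contra hcon
    push_neg at hcon
    have g1 := f3 (m-2) (by omega)
    have hidx : m - 2 + 1 = m - 1 := by omega
    rw [hidx] at g1
    have hwm1lt := hw_lt (m-1) (by omega)
    have hmono := hw_mono (m-2) (m-1) (by omega) (by omega)
    obtain ⟨j, hj, hjne, hd⟩ := nres (m-1) (by omega) 1 le_rfl hk (by omega) (by omega)
    have hjm : j ≤ m - 2 := by omega
    have hle := hw_le j (m-2) hjm (by omega)
    rcases hd with hd | hd <;> (simp only [Nat.dist] at hd; omega)
  have hmain : n - 1 ≤ m/2 * (3*k+2) + k := by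
    rcases eq_or_lt_of_le hm1 with hm1' | hm2
    · have hme : m = 1 := hm1'.symm
      have hidx : m - 1 = 0 := by omega
      rw [hidx] at f2
      rcases Nat.eq_zero_or_pos (w 0) with h0 | h0
      · have hq0 : m/2 = 0 := by omega
        rw [hq0]
        simp
        omega
      · rcases le_or_gt (w 0 + 1) (n-1) with hcase | hcase
        · obtain ⟨j, hj, hjne, hd⟩ := nres 0 (by omega) 1 le_rfl hk h0 hcase
          omega
        · have hq0 : m/2 = 0 := by omega
          rw [hq0]
          simp
          omega
    · have hcb := chainAux_bound k m w f1 f5 f4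
      rcases Nat.even_or_odd m with ⟨Q, hQ⟩ | ⟨Q, hQ⟩
      · have hQ1 : 1 ≤ Q := by omega
        have hb := hcb (m-1) (by omega)
        have hmod : (m-1) % 2 = 1 := by omega
        have hdiv : (m-1) / 2 = Q - 1 := by omega
        rw [hmod, hdiv] at hb
        have hQQ : (Q-1) * (3*k+2) + (3*k+2) = Q * (3*k+2) := by
          cases Q with
          | zero => omega
          | succ t => simp [Nat.succ_sub_one]; ring
        have hm2d : m / 2 = Q := by omega
        rw [hm2d]
        omega
      · have hQ1 : 1 ≤ Q := by omega
        have hb := hcb (m-2) (by omega)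
        have hmod : (m-2) % 2 = 1 := by omega
        have hdiv : (m-2) / 2 = Q - 1 := by omega
        rw [hmod, hdiv] at hb
        have hQQ : (Q-1) * (3*k+2) + (3*k+2) = Q * (3*k+2) := by
          cases Q with
          | zero => omega
          | succ t => simp [Nat.succ_sub_one]; ring
        have hm2d : m / 2 = Q := by omega
        rw [hm2d]
        have hf6 := f6 (by omega)
        omega
  exact clowAux_le k m (n-1) hmain
end
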